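/- arXiv:1908.03802 — 8 statements merged into one kernel-verified Lean document; each statement's English description precedes it below -/
import Mathlib

section
/- (Almost-rigidity, Theorem 1.) Assume the framework setup and suppose D < 1/2. Then every continuous path q : [0,1] → ℝ^{dn} with q(0) = p, q(t) ∈ 𝒞^p for all t, and which preserves all edge lengths of p (i.e. |q(t)_i − q(t)_j| = |p_i − p_j| for every edge (i,j) ∈ E and every t ∈ [0,1]) satisfies |q(t) − p| ≤ η₁ for all t ∈ [0,1]. -/
noncomputable section
open scoped BigOperators InnerProductSpace Classical

/-- Configuration space of `n` points in `ℝ^d`, with the Euclidean norm on `ℝ^{dn}`. -/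
abbrev Config (n d : ℕ) := PiLp 2 (fun _ : Fin n => EuclideanSpace ℝ (Fin d))

/-- The rigidity operator `R(q)` applied to `u`: the `k`-th entry, for edge `k = (i,j)`,
is `⟨q_i - q_j, u_i - u_j⟩`. -/
def rig {n d m : ℕ} (E : Fin m → Fin n × Fin n) (q u : Config n d) :
    EuclideanSpace ℝ (Fin m) :=
  WithLp.toLp 2 (fun k => ⟪q (E k).1 - q (E k).2, u (E k).1 - u (E k).2⟫_ℝ)

/-- The stress form `Ω_ω(v) = Σ_{(i,j)∈E} ω_{ij} |v_i - v_j|²`. -/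
def stressForm {n d m : ℕ} (E : Fin m → Fin n × Fin n)
    (ω : EuclideanSpace ℝ (Fin m)) (v : Config n d) : ℝ :=
  ∑ k, ω k * ‖v (E k).1 - v (E k).2‖ ^ 2

/-- The vector `ωᵀ R(p) ∈ ℝ^{dn}` whose `l`-th block is `Σ_{j : (l,j)∈E} ω_{lj} (p_l - p_j)`. -/
def stressGrad {n d m : ℕ} (E : Fin m → Fin n × Fin n)
    (ω : EuclideanSpace ℝ (Fin m)) (p : Config n d) : Config n d :=
  WithLp.toLp 2 (fun l => ∑ k, (((if (E k).1 = l then (1:ℝ) else 0) - (if (E k).2 = l then (1:ℝ) else 0)) * ω k) •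
    (p (E k).1 - p (E k).2))

/-- The vector `e(q) ∈ ℝ^m` of squared edge lengths. -/
def esq {n d m : ℕ} (E : Fin m → Fin n × Fin n) (q : Config n d) :
    EuclideanSpace ℝ (Fin m) :=
  WithLp.toLp 2 (fun k => ‖q (E k).1 - q (E k).2‖ ^ 2)

/-- `z` bounds the number of edges incident to each vertex (`z ≥` the maximum adjacency). -/
def degBound {n m : ℕ} (E : Fin m → Fin n × Fin n) (z : ℝ) : Prop :=
  ∀ l : Fin n, ((Finset.univ.filter (fun k => (E k).1 = l ∨ (E k).2 = l)).card : ℝ) ≤ z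

/-!
Write `v = q t - p`. Preservation of the edge lengths of `p` gives `R(p) v = -½ (|v_i - v_j|²)`,
so `Ω_ω(v) = -2 ⟨ωᵀR(p), v⟩ ≤ 2 |ωᵀR(p)| |v|` and `|R(p) v|² ≤ z |v|⁴`. Plugging these into the
(homogenized) lower bound `λ |v|² ≤ 2κ |R(p) v|² + Ω_ω(v)` shows that `|v| ≤ L` forces
`|v| ≤ ⅔ η₁`. Since `D < 1/2` gives `η₁ < L`, the continuous function `t ↦ |q t - p|`, which
starts at `0`, can never cross the gap between `⅔ η₁` and `L`.
-/

open Set Finset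

lemma norm_sub_sq_le_two_mul {F : Type*} [SeminormedAddCommGroup F] (a b : F) :
    ‖a - b‖ ^ 2 ≤ 2 * (‖a‖ ^ 2 + ‖b‖ ^ 2) :=
  calc ‖a - b‖ ^ 2 ≤ (‖a‖ + ‖b‖) ^ 2 := by gcongr; exact norm_sub_le a b
    _ ≤ 2 * (‖a‖ ^ 2 + ‖b‖ ^ 2) := add_sq_le

lemma norm_apply_sub_apply_sq_le {ι F : Type*} [Fintype ι] [SeminormedAddCommGroup F]
    (v : PiLp 2 (fun _ : ι => F)) {i j : ι} (hij : i ≠ j) :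
    ‖v i - v j‖ ^ 2 ≤ 2 * ‖v‖ ^ 2 := by
  have hpair : ‖v i‖ ^ 2 + ‖v j‖ ^ 2 ≤ ‖v‖ ^ 2 := by
    rw [PiLp.norm_sq_eq_of_L2, ← sum_pair (f := fun l => ‖v l‖ ^ 2) hij]
    exact sum_le_sum_of_subset_of_nonneg (subset_univ _) fun _ _ _ => by positivity
  linarith [norm_sub_sq_le_two_mul (v i) (v j)]

lemma sum_add_eq_sum_card_filter_mul {ι α : Type*} [Fintype ι] [Fintype α] [DecidableEq α]
    (e : ι → α × α) (he : ∀ k, (e k).1 ≠ (e k).2) (f : α → ℝ) :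
    ∑ k, (f (e k).1 + f (e k).2) = ∑ l, (#{k | (e k).1 = l ∨ (e k).2 = l} : ℝ) * f l := by
  have hpair : ∀ k, ∑ l, (if (e k).1 = l ∨ (e k).2 = l then f l else 0) =
      f (e k).1 + f (e k).2 := by
    intro k
    rw [← sum_filter, show ({l | (e k).1 = l ∨ (e k).2 = l} : Finset α) =
      {(e k).1, (e k).2} by ext; simp [eq_comm], sum_pair (he k)]
  simp only [card_filter, Nat.cast_sum, Nat.cast_ite, Nat.cast_one, Nat.cast_zero,
    sum_mul, ite_mul, one_mul, zero_mul]
  rw [sum_comm]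
  exact sum_congr rfl fun k _ => (hpair k).symm

lemma inner_eq_neg_half_norm_sq_of_norm_add_eq {F : Type*} [NormedAddCommGroup F]
    [InnerProductSpace ℝ F] {a b : F} (h : ‖a + b‖ = ‖a‖) :
    ⟪a, b⟫_ℝ = -(1 / 2) * ‖b‖ ^ 2 := by
  have := norm_add_sq_real a b
  rw [h] at this
  linarith

theorem forall_le_of_continuousOn_of_gap {f : ℝ → ℝ} {a b c c' : ℝ}
    (hf : ContinuousOn f (Icc a b)) (hfa : f a ≤ c) (hc : c < c')
    (hgap : ∀ t ∈ Icc a b, f t ≤ c' → f t ≤ c) :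
    ∀ t ∈ Icc a b, f t ≤ c := by
  intro t ht
  by_contra! hct
  have hc't : c' < f t := by
    by_contra! h
    exact hct.not_ge (hgap t ht h)
  obtain ⟨s, hs, hfs⟩ := intermediate_value_Icc ht.1 (hf.mono (Icc_subset_Icc_right ht.2))
    ⟨hfa.trans hc.le, hc't.le⟩
  linarith [hgap s ⟨hs.1, hs.2.trans ht.2⟩ hfs.le]

lemma le_of_sq_le_quartic_add_linear {lam κz G L x : ℝ} (hlam : 0 < lam) (hκz : 0 ≤ κz)
    (hG : 0 ≤ G) (hL : 8 * κz * L ^ 2 = lam) (hx : 0 ≤ x) (hxL : x ≤ L)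
    (h : lam * x ^ 2 ≤ 2 * κz * x ^ 4 + 2 * G * x) :
    x ≤ 8 * G / (3 * lam) := by
  have hquartic : 2 * κz * x ^ 4 ≤ lam / 4 * x ^ 2 := by
    have : x ^ 2 ≤ L ^ 2 := by gcongr
    rw [← hL]
    nlinarith [mul_nonneg hκz (mul_nonneg (sub_nonneg.mpr this) (sq_nonneg x))]
  rw [le_div_iff₀ (by positivity)]
  rcases hx.eq_or_lt with rfl | hxpos
  · linarith
  · nlinarith [mul_pos hlam hxpos]

section Framework

variable {n d m : ℕ} (E : Fin m → Fin n × Fin n)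

lemma rig_smul (p v : Config n d) (c : ℝ) : rig E p (c • v) = c • rig E p v := by
  ext k
  simp only [rig, PiLp.toLp_apply, PiLp.smul_apply, ← smul_sub, real_inner_smul_right,
    smul_eq_mul]

lemma stressForm_smul (ω : EuclideanSpace ℝ (Fin m)) (v : Config n d) (c : ℝ) :
    stressForm E ω (c • v) = c ^ 2 * stressForm E ω v := by
  simp only [stressForm, PiLp.smul_apply, ← smul_sub, norm_smul, Real.norm_eq_abs, mul_pow,
    sq_abs, mul_sum]
  exact sum_congr rfl fun k _ => by ring

lemma inner_stressGrad (ω : EuclideanSpace ℝ (Fin m)) (p v : Config n d) :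
    ⟪stressGrad E ω p, v⟫_ℝ = ∑ k, ω k * rig E p v k := by
  rw [PiLp.inner_apply]
  simp only [stressGrad, PiLp.toLp_apply, sum_inner, real_inner_smul_left]
  rw [sum_comm]
  refine sum_congr rfl fun k _ => ?_
  simp only [sub_mul, ite_mul, one_mul, zero_mul, sum_sub_distrib, sum_ite_eq,
    Finset.mem_univ, if_true, rig, PiLp.toLp_apply, inner_sub_right]
  ring

lemma sum_norm_edge_sq_le (hE : ∀ k, (E k).1 ≠ (E k).2) {z : ℝ} (hdeg : degBound E z)
    (v : Config n d) :
    ∑ k, ‖v (E k).1 - v (E k).2‖ ^ 2 ≤ 2 * z * ‖v‖ ^ 2 :=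
  calc ∑ k, ‖v (E k).1 - v (E k).2‖ ^ 2
      ≤ ∑ k, 2 * (‖v (E k).1‖ ^ 2 + ‖v (E k).2‖ ^ 2) :=
        sum_le_sum fun k _ => norm_sub_sq_le_two_mul _ _
    _ = 2 * ∑ l, (#{k | (E k).1 = l ∨ (E k).2 = l} : ℝ) * ‖v l‖ ^ 2 := by
        rw [← mul_sum, sum_add_eq_sum_card_filter_mul E hE fun l => ‖v l‖ ^ 2]
    _ ≤ 2 * ∑ l, z * ‖v l‖ ^ 2 := by gcongr with l; exact hdeg l
    _ = 2 * z * ‖v‖ ^ 2 := by rw [← mul_sum, PiLp.norm_sq_eq_of_L2]; ring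

lemma mul_norm_sq_le_of_mem {p : Config n d} {C : Submodule ℝ (Config n d)} {κ lam : ℝ}
    {ω : EuclideanSpace ℝ (Fin m)}
    (hlower : ∀ v ∈ C, ‖v‖ = 1 → lam ≤ 2 * κ * ‖rig E p v‖ ^ 2 + stressForm E ω v)
    {v : Config n d} (hv : v ∈ C) :
    lam * ‖v‖ ^ 2 ≤ 2 * κ * ‖rig E p v‖ ^ 2 + stressForm E ω v := by
  rcases eq_or_ne v 0 with rfl | hv0
  · rw [show rig E p 0 = 0 by ext; simp [rig]]
    simp [stressForm]
  have hnv : 0 < ‖v‖ := norm_pos_iff.mpr hv0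
  have hunit := hlower (‖v‖⁻¹ • v) (C.smul_mem _ hv) (norm_smul_inv_norm hv0)
  rw [rig_smul, stressForm_smul, norm_smul, mul_pow, norm_inv, norm_norm] at hunit
  calc lam * ‖v‖ ^ 2
      ≤ (2 * κ * (‖v‖⁻¹ ^ 2 * ‖rig E p v‖ ^ 2) + ‖v‖⁻¹ ^ 2 * stressForm E ω v) * ‖v‖ ^ 2 := by
        gcongr
    _ = 2 * κ * ‖rig E p v‖ ^ 2 + stressForm E ω v := by field_simp

variable {p v : Config n d}

lemma rig_apply_of_norm_edge_eq {k : Fin m}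
    (h : ‖(p + v) (E k).1 - (p + v) (E k).2‖ = ‖p (E k).1 - p (E k).2‖) :
    rig E p v k = -(1 / 2) * ‖v (E k).1 - v (E k).2‖ ^ 2 := by
  apply inner_eq_neg_half_norm_sq_of_norm_add_eq
  simpa only [PiLp.add_apply, add_sub_add_comm] using h

section EdgeLengthsPreserved

variable (hrig : ∀ k, rig E p v k = -(1 / 2) * ‖v (E k).1 - v (E k).2‖ ^ 2)
include hrig

lemma stressForm_eq_neg_two_inner_stressGrad (ω : EuclideanSpace ℝ (Fin m)) :
    stressForm E ω v = -2 * ⟪stressGrad E ω p, v⟫_ℝ := by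
  rw [inner_stressGrad, stressForm, mul_sum]
  exact sum_congr rfl fun k _ => by rw [hrig k]; ring

lemma norm_rig_sq_le (hE : ∀ k, (E k).1 ≠ (E k).2) {z : ℝ} (hdeg : degBound E z) :
    ‖rig E p v‖ ^ 2 ≤ z * ‖v‖ ^ 4 := by
  have hedge : ∀ k, rig E p v k ^ 2 ≤ 1 / 2 * ‖v‖ ^ 2 * ‖v (E k).1 - v (E k).2‖ ^ 2 := by
    intro k
    have := norm_apply_sub_apply_sq_le v (hE k)
    rw [hrig k]
    nlinarith [sq_nonneg ‖v (E k).1 - v (E k).2‖]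
  calc ‖rig E p v‖ ^ 2 = ∑ k, rig E p v k ^ 2 := by simp [EuclideanSpace.norm_sq_eq]
    _ ≤ ∑ k, 1 / 2 * ‖v‖ ^ 2 * ‖v (E k).1 - v (E k).2‖ ^ 2 := sum_le_sum fun k _ => hedge k
    _ = 1 / 2 * ‖v‖ ^ 2 * ∑ k, ‖v (E k).1 - v (E k).2‖ ^ 2 := by rw [mul_sum]
    _ ≤ 1 / 2 * ‖v‖ ^ 2 * (2 * z * ‖v‖ ^ 2) := by gcongr; exact sum_norm_edge_sq_le E hE hdeg v
    _ = z * ‖v‖ ^ 4 := by ring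

lemma stressForm_le_of_rig_eq (ω : EuclideanSpace ℝ (Fin m)) :
    stressForm E ω v ≤ 2 * ‖stressGrad E ω p‖ * ‖v‖ := by
  rw [stressForm_eq_neg_two_inner_stressGrad E hrig]
  linarith [neg_le_of_abs_le (abs_real_inner_le_norm (stressGrad E ω p) v)]

end EdgeLengthsPreserved

theorem norm_le_of_norm_edge_eq {C : Submodule ℝ (Config n d)} {z κ lam : ℝ}
    {ω : EuclideanSpace ℝ (Fin m)} (hE : ∀ k, (E k).1 ≠ (E k).2) (hz : 0 < z)
    (hdeg : degBound E z) (hκ : 0 < κ) (hlam : 0 < lam)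
    (hlower : ∀ v ∈ C, ‖v‖ = 1 → lam ≤ 2 * κ * ‖rig E p v‖ ^ 2 + stressForm E ω v)
    (hv : v ∈ C) (hlen : ∀ k, ‖(p + v) (E k).1 - (p + v) (E k).2‖ = ‖p (E k).1 - p (E k).2‖)
    (hvL : ‖v‖ ≤ √(lam / (8 * z * κ))) :
    ‖v‖ ≤ 8 * ‖stressGrad E ω p‖ / (3 * lam) := by
  have hrig k := rig_apply_of_norm_edge_eq E (hlen k)
  refine le_of_sq_le_quartic_add_linear (κz := κ * z) hlam (by positivity) (norm_nonneg _)
    (by rw [Real.sq_sqrt (by positivity)]; field_simp) (norm_nonneg v) hvL ?_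
  calc lam * ‖v‖ ^ 2 ≤ 2 * κ * ‖rig E p v‖ ^ 2 + stressForm E ω v :=
        mul_norm_sq_le_of_mem E hlower hv
    _ ≤ 2 * κ * (z * ‖v‖ ^ 4) + 2 * ‖stressGrad E ω p‖ * ‖v‖ := by
      gcongr
      · exact norm_rig_sq_le E hrig hE hdeg
      · exact stressForm_le_of_rig_eq E hrig ω
    _ = 2 * (κ * z) * ‖v‖ ^ 4 + 2 * ‖stressGrad E ω p‖ * ‖v‖ := by ring

end Framework

theorem almost_rigidity_general {n d m : ℕ} (E : Fin m → Fin n × Fin n)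
    (hE : ∀ k, (E k).1 ≠ (E k).2)
    (p : Config n d) (C : Submodule ℝ (Config n d))
    (z κ lam : ℝ) (ω : EuclideanSpace ℝ (Fin m))
    (hz : 1 ≤ z) (hdeg : degBound E z)
    (hκ : 0 < κ) (hlam : 0 < lam)
    (hlower : ∀ v ∈ C, ‖v‖ = 1 → lam ≤ 2 * κ * ‖rig E p v‖ ^ 2 + stressForm E ω v)
    (L μbar η₁ D : ℝ)
    (hL : L = Real.sqrt (lam / (8 * z * κ)))
    (hη₁ : η₁ = 4 * ‖stressGrad E ω p‖ / lam)
    (hD : D = (η₁ / L) * (Real.sqrt μbar + η₁ / L))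
    (hDlt : D < 1 / 2)
    (q : ℝ → Config n d)
    (hcont : ContinuousOn q (Set.Icc 0 1))
    (hq0 : q 0 = p)
    (hqC : ∀ t ∈ Set.Icc (0:ℝ) 1, q t - p ∈ C)
    (hlen : ∀ t ∈ Set.Icc (0:ℝ) 1, ∀ k,
      ‖q t (E k).1 - q t (E k).2‖ = ‖p (E k).1 - p (E k).2‖) :
    ∀ t ∈ Set.Icc (0:ℝ) 1, ‖q t - p‖ ≤ η₁ := by
  have hz₀ : 0 < z := one_pos.trans_le hz
  have hL₀ : 0 < L := hL ▸ Real.sqrt_pos.mpr (by positivity)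
  have hη₁₀ : 0 ≤ η₁ := hη₁ ▸ by positivity
  have hη₁L : η₁ < L := by
    have hratio : (η₁ / L) ^ 2 < 1 := by
      nlinarith [Real.sqrt_nonneg μbar, div_nonneg hη₁₀ hL₀.le]
    rwa [sq_lt_one_iff₀ (by positivity), div_lt_one hL₀] at hratio
  have hlocal : ∀ t ∈ Icc (0:ℝ) 1, ‖q t - p‖ ≤ L → ‖q t - p‖ ≤ 2 / 3 * η₁ := fun t ht htL =>
    (norm_le_of_norm_edge_eq E hE hz₀ hdeg hκ hlam hlower (hqC t ht)
      (by simpa only [add_sub_cancel] using hlen t ht) (hL ▸ htL)).trans_eq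
      (by rw [hη₁]; ring)
  intro t ht
  have : ‖q t - p‖ ≤ 2 / 3 * η₁ := forall_le_of_continuousOn_of_gap (f := fun s => ‖q s - p‖)
    (hcont.sub continuousOn_const).norm
    (by simpa [hq0] using hη₁₀) (by linarith) hlocal t ht
  linarith

/-- **Theorem 1 (Almost-rigidity).** Under the framework setup, if `D < 1/2`, then any
continuous path starting at `p`, staying in `𝒞^p`, and preserving all edge lengths of `p`,
remains within distance `η₁` of `p`. -/
theorem almost_rigidity {n d m : ℕ} (E : Fin m → Fin n × Fin n) (hm : 0 < m)
    (hE : ∀ k, (E k).1 ≠ (E k).2)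
    (p : Config n d) (C : Submodule ℝ (Config n d))
    (z κ lam μ₀ : ℝ) (ω : EuclideanSpace ℝ (Fin m))
    (hz : 1 ≤ z) (hdeg : degBound E z)
    (hκ : 0 < κ) (hlam : 0 < lam) (hμ₀ : μ₀ ≤ lam / 2)
    (hlower : ∀ v ∈ C, ‖v‖ = 1 → lam ≤ 2 * κ * ‖rig E p v‖ ^ 2 + stressForm E ω v)
    (hμlower : ∀ v ∈ C, ‖v‖ = 1 → μ₀ ≤ stressForm E ω v)
    (L μbar η₁ D : ℝ)
    (hL : L = Real.sqrt (lam / (8 * z * κ)))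
    (hμbar : μbar = 1 - μ₀ / lam)
    (hη₁ : η₁ = 4 * ‖stressGrad E ω p‖ / lam)
    (hD : D = (η₁ / L) * (Real.sqrt μbar + η₁ / L))
    (hDlt : D < 1 / 2)
    (q : ℝ → Config n d)
    (hcont : ContinuousOn q (Set.Icc 0 1))
    (hq0 : q 0 = p)
    (hqC : ∀ t ∈ Set.Icc (0:ℝ) 1, q t - p ∈ C)
    (hlen : ∀ t ∈ Set.Icc (0:ℝ) 1, ∀ k,
      ‖q t (E k).1 - q t (E k).2‖ = ‖p (E k).1 - p (E k).2‖) :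
    ∀ t ∈ Set.Icc (0:ℝ) 1, ‖q t - p‖ ≤ η₁ :=
  almost_rigidity_general E hE p C z κ lam ω hz hdeg hκ hlam hlower L μbar η₁ D hL hη₁ hD hDlt q
    hcont hq0 hqC hlen
end
end

section
/- (Nearby prestress stable framework, Theorem 4.) Assume the framework setup and suppose D_pss = (η₁/L)(√μ̄ + (3/2)(η₁/L) + (1/2)(|p|/L)) < 1/2. Then there exists p' ∈ 𝒞^p with |p' − p| ≤ η₁ such that, defining the stress ω' ∈ ℝ^m by ω'_{ij} = κ(|p'_i − p'_j|² − |p_i − p_j|²) + ω_{ij}, one has: Σ_{(i,j)∈E} ω'_{ij}⟨p'_i − p'_j, v_i − v_j⟩ = 0 for every v ∈ 𝒞 (the energy gradient vanishes on 𝒞 at p'), and 2κ|R(p')v|² + Ω_{ω'}(v) > 0 for every nonzero v ∈ 𝒞 (the energy Hessian is positive definite on 𝒞). In particular, every nonzero v ∈ 𝒞 with R(p')v = 0 satisfies Ω_{ω'}(v) > 0, so p' is prestress stable. -/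
noncomputable section
open scoped BigOperators InnerProductSpace Classical

/-!
Consider the energy `G(q) = κ/4 ‖e(q) - e(p)‖² + ½ ⟪ω, e(q) - e(p)⟫`, where `e` is the vector of
squared edge lengths. Its derivative at `q` in direction `v` is `⟪ω', R(q) v⟫` with
`ω' = κ (e(q) - e(p)) + ω`, and its second derivative is `2κ ‖R(q) v‖² + Ω_{ω'}(v)`.

Minimize `G` over `p + (𝒞 ∩ closedBall 0 η₁)`. On the sphere `‖q - p‖ = η₁` the quadratic part
of `G` beats both the linear part `⟪ωᵀR(p), q - p⟫ ≥ -λ η₁² / 4` and the quartic part, so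
`G > 0 = G(p)` there: the minimizer is interior, hence critical. At any `q` in the ball the second
derivative differs from the one at `p` by terms of relative size `η₁ (2√μ̄ L + ‖p‖) / L²`, which
`D_pss < 1/2` keeps below `1`. In both estimates the cross terms are split by
`t ‖x + y‖² ≥ t (1 - t) ‖x‖² - (1 - t) ‖y‖²` with `t` of order `η₁ / L`.
-/

open Finset

section Inequalities

variable {F : Type*}

lemma mul_norm_add_sq_ge [NormedAddCommGroup F] [InnerProductSpace ℝ F] (x y : F) (t : ℝ) :
    t * (1 - t) * ‖x‖ ^ 2 - (1 - t) * ‖y‖ ^ 2 ≤ t * ‖x + y‖ ^ 2 := by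
  have h : t * ‖x + y‖ ^ 2 - (t * (1 - t) * ‖x‖ ^ 2 - (1 - t) * ‖y‖ ^ 2) = ‖t • x + y‖ ^ 2 := by
    rw [norm_add_sq_real, norm_add_sq_real, norm_smul, real_inner_smul_left, Real.norm_eq_abs,
      mul_pow, sq_abs]
    ring
  linarith [sq_nonneg ‖t • x + y‖]

lemma mul_norm_sq_le_of_norm_eq_one [NormedAddCommGroup F] [NormedSpace ℝ F] {C : Submodule ℝ F}
    {f : F → ℝ} (hf : ∀ (c : ℝ) v, f (c • v) = c ^ 2 * f v) {a : ℝ}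
    (h : ∀ v ∈ C, ‖v‖ = 1 → a ≤ f v) {v : F} (hv : v ∈ C) : a * ‖v‖ ^ 2 ≤ f v := by
  rcases eq_or_ne v 0 with rfl | hv0
  · simpa using (hf 0 0).ge
  · calc a * ‖v‖ ^ 2 ≤ ‖v‖ ^ 2 * f (‖v‖⁻¹ • v) := by
          rw [mul_comm]
          exact mul_le_mul_of_nonneg_left (h _ (C.smul_mem _ hv) (norm_smul_inv_norm hv0))
            (by positivity)
      _ = f v := by rw [← hf, smul_inv_smul₀ (norm_ne_zero_iff.2 hv0)]

end Inequalities

section Minimization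

variable {F : Type*} [NormedAddCommGroup F] [NormedSpace ℝ F]

lemma Submodule.exists_norm_lt_isMinOn [FiniteDimensional ℝ F] (C : Submodule ℝ F) {G : F → ℝ}
    (hG : Continuous G) {η : ℝ} (hη : 0 ≤ η) (hbd : ∀ w ∈ C, ‖w‖ = η → G 0 < G w) :
    ∃ u ∈ C, ‖u‖ < η ∧ IsMinOn G (C ∩ Metric.closedBall 0 η) u := by
  have hK : IsCompact ((C : Set F) ∩ Metric.closedBall 0 η) :=
    (isCompact_closedBall 0 η).inter_left C.closed_of_finiteDimensional
  have h0 : (0 : F) ∈ (C : Set F) ∩ Metric.closedBall 0 η :=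
    ⟨C.zero_mem, Metric.mem_closedBall_self hη⟩
  obtain ⟨u, ⟨huC, hu⟩, hmin⟩ := hK.exists_isMinOn ⟨0, h0⟩ hG.continuousOn
  rw [mem_closedBall_zero_iff] at hu
  refine ⟨u, huC, hu.lt_of_ne fun hη' => ?_, hmin⟩
  exact (hbd u huC hη').not_ge (hmin h0)

lemma IsMinOn.isLocalMin_line {C : Submodule ℝ F} {G : F → ℝ} {η : ℝ} {u v : F}
    (hmin : IsMinOn G (C ∩ Metric.closedBall 0 η) u) (huC : u ∈ C) (hu : ‖u‖ < η) (hv : v ∈ C) :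
    IsLocalMin (fun s : ℝ => G (u + s • v)) 0 := by
  have hline : Filter.Tendsto (fun s : ℝ => u + s • v) (nhds 0) (nhds u) := by
    have hcont : Continuous fun s : ℝ => u + s • v := by fun_prop
    simpa using hcont.tendsto 0
  filter_upwards [hline.eventually (Metric.isOpen_ball.mem_nhds (mem_ball_zero_iff.2 hu))]
    with s hs
  simpa using hmin ⟨C.add_mem huC (C.smul_mem s hv), Metric.ball_subset_closedBall hs⟩

end Minimization

section Constants

lemma pos_and_eight_mul_sq_eq {z κ lam L : ℝ} (hz : 0 < z) (hκ : 0 < κ) (hlam : 0 < lam)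
    (hL : L = Real.sqrt (lam / (8 * z * κ))) : 0 < L ∧ 8 * z * κ * L ^ 2 = lam := by
  subst hL
  refine ⟨Real.sqrt_pos.2 (by positivity), ?_⟩
  rw [Real.sq_sqrt (by positivity)]
  field_simp

lemma sqrt_pos_and_eq_mul_one_sub_sq {lam μ₀ μbar : ℝ} (hlam : 0 < lam) (hμ₀ : μ₀ ≤ lam / 2)
    (hμbar : μbar = 1 - μ₀ / lam) :
    0 < Real.sqrt μbar ∧ 1 / 2 ≤ Real.sqrt μbar ^ 2 ∧ μ₀ = lam * (1 - Real.sqrt μbar ^ 2) := by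
  have hhalf : 1 / 2 ≤ μbar := by
    rw [hμbar, le_sub_comm, div_le_iff₀ hlam]
    linarith
  rw [Real.sq_sqrt (by linarith)]
  refine ⟨Real.sqrt_pos.2 (by linarith), hhalf, ?_⟩
  rw [hμbar]
  field_simp
  ring

lemma add_lt_sq_of_mul_lt_half {η L s P : ℝ} (hL : 0 < L)
    (hD : η / L * (s + 3 / 2 * (η / L) + 1 / 2 * (P / L)) < 1 / 2) :
    2 * η * s * L + η * P < L ^ 2 := by
  have h : η / L * (s + 3 / 2 * (η / L) + 1 / 2 * (P / L)) * (2 * L ^ 2)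
      = 2 * η * s * L + 3 * η ^ 2 + η * P := by field_simp
  have hD' := mul_lt_mul_of_pos_right hD (by positivity : (0 : ℝ) < 2 * L ^ 2)
  rw [h] at hD'
  nlinarith [sq_nonneg η]

end Constants

namespace Framework

variable {n d m : ℕ}

def edge (E : Fin m → Fin n × Fin n) (k : Fin m) (q : Config n d) : EuclideanSpace ℝ (Fin d) :=
  q (E k).1 - q (E k).2

variable {E : Fin m → Fin n × Fin n}

@[simp] lemma edge_add (k : Fin m) (q w : Config n d) :
    edge E k (q + w) = edge E k q + edge E k w := by
  simp only [edge, PiLp.add_apply]; abel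

@[simp] lemma edge_smul (k : Fin m) (c : ℝ) (q : Config n d) :
    edge E k (c • q) = c • edge E k q := by
  simp only [edge, PiLp.smul_apply, smul_sub]

lemma rig_apply (q u : Config n d) (k : Fin m) : rig E q u k = ⟪edge E k q, edge E k u⟫_ℝ := rfl

lemma esq_apply (q : Config n d) (k : Fin m) : esq E q k = ‖edge E k q‖ ^ 2 := rfl

lemma norm_edge_sq_le_sum_incident (w : Config n d) (k : Fin m) :
    ‖edge E k w‖ ^ 2 ≤ 2 * ∑ l, if (E k).1 = l ∨ (E k).2 = l then ‖w l‖ ^ 2 else 0 := by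
  by_cases hk : (E k).1 = (E k).2
  · rw [edge, hk, sub_self, norm_zero, sq, zero_mul]
    exact mul_nonneg zero_le_two (sum_nonneg fun l _ => by split_ifs <;> positivity)
  · have hfilter : univ.filter (fun l => (E k).1 = l ∨ (E k).2 = l) = {(E k).1, (E k).2} := by
      ext l; simp [eq_comm]
    rw [← sum_filter, hfilter, sum_pair hk, edge]
    nlinarith [norm_sub_le (w (E k).1) (w (E k).2), norm_nonneg (w (E k).1 - w (E k).2),
      sq_nonneg (‖w (E k).1‖ - ‖w (E k).2‖)]

lemma norm_edge_sq_le (w : Config n d) (k : Fin m) : ‖edge E k w‖ ^ 2 ≤ 2 * ‖w‖ ^ 2 := by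
  refine (norm_edge_sq_le_sum_incident w k).trans ?_
  rw [PiLp.norm_sq_eq_of_L2]
  gcongr with l
  split_ifs <;> simp

lemma sum_norm_edge_sq_le {z : ℝ} (hdeg : degBound E z) (w : Config n d) :
    ∑ k, ‖edge E k w‖ ^ 2 ≤ 2 * z * ‖w‖ ^ 2 := by
  calc ∑ k, ‖edge E k w‖ ^ 2
      ≤ ∑ k, 2 * ∑ l, if (E k).1 = l ∨ (E k).2 = l then ‖w l‖ ^ 2 else 0 :=
        sum_le_sum fun k _ => norm_edge_sq_le_sum_incident w k
    _ = 2 * ∑ l, (univ.filter fun k => (E k).1 = l ∨ (E k).2 = l).card * ‖w l‖ ^ 2 := by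
        rw [← mul_sum, sum_comm]
        simp only [sum_ite, sum_const_zero, add_zero, sum_const, nsmul_eq_mul]
    _ ≤ 2 * ∑ l, z * ‖w l‖ ^ 2 := by
        gcongr with l
        exact hdeg l
    _ = 2 * z * ‖w‖ ^ 2 := by rw [PiLp.norm_sq_eq_of_L2, ← mul_sum, mul_assoc]

lemma sum_norm_edge_sq_mul_le {z : ℝ} (hdeg : degBound E z) (q v : Config n d) :
    ∑ k, ‖edge E k q‖ ^ 2 * ‖edge E k v‖ ^ 2 ≤ 4 * z * ‖q‖ ^ 2 * ‖v‖ ^ 2 := by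
  calc ∑ k, ‖edge E k q‖ ^ 2 * ‖edge E k v‖ ^ 2
      ≤ ∑ k, 2 * ‖q‖ ^ 2 * ‖edge E k v‖ ^ 2 := by
        gcongr with k
        exact norm_edge_sq_le q k
    _ ≤ 2 * ‖q‖ ^ 2 * (2 * z * ‖v‖ ^ 2) := by
        rw [← mul_sum]
        gcongr
        exact sum_norm_edge_sq_le hdeg v
    _ = 4 * z * ‖q‖ ^ 2 * ‖v‖ ^ 2 := by ring

lemma norm_rig_sq_le {z : ℝ} (hdeg : degBound E z) (q v : Config n d) :
    ‖rig E q v‖ ^ 2 ≤ 4 * z * ‖q‖ ^ 2 * ‖v‖ ^ 2 := by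
  refine le_trans ?_ (sum_norm_edge_sq_mul_le hdeg q v)
  rw [EuclideanSpace.real_norm_sq_eq]
  gcongr with k
  rw [rig_apply, ← mul_pow]
  exact sq_le_sq' (neg_le_of_abs_le (abs_real_inner_le_norm _ _)) (real_inner_le_norm _ _)

lemma norm_esq_sq_le {z : ℝ} (hdeg : degBound E z) (w : Config n d) :
    ‖esq E w‖ ^ 2 ≤ 4 * z * ‖w‖ ^ 4 := by
  have h := sum_norm_edge_sq_mul_le hdeg w w
  rw [EuclideanSpace.real_norm_sq_eq]
  simp only [esq_apply, ← sq] at h ⊢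
  linarith

lemma neg_le_stressForm {z c : ℝ} (hdeg : degBound E z) (hc : 0 ≤ c)
    {δ : EuclideanSpace ℝ (Fin m)} (hδ : ∀ k, -c ≤ δ k) (v : Config n d) :
    -(2 * z * c * ‖v‖ ^ 2) ≤ stressForm E δ v := by
  calc -(2 * z * c * ‖v‖ ^ 2) = -c * (2 * z * ‖v‖ ^ 2) := by ring
    _ ≤ -c * ∑ k, ‖edge E k v‖ ^ 2 :=
        mul_le_mul_of_nonpos_left (sum_norm_edge_sq_le hdeg v) (neg_nonpos.2 hc)
    _ ≤ stressForm E δ v := by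
        rw [mul_sum]
        exact sum_le_sum fun k _ => mul_le_mul_of_nonneg_right (hδ k) (sq_nonneg _)

lemma rig_add_left (q u v : Config n d) : rig E (q + u) v = rig E q v + rig E u v := by
  ext k
  simp only [PiLp.add_apply, rig_apply, edge_add, inner_add_left]

lemma rig_smul_right (q v : Config n d) (c : ℝ) : rig E q (c • v) = c • rig E q v := by
  ext k
  simp only [PiLp.smul_apply, rig_apply, edge_smul, real_inner_smul_right, smul_eq_mul]

lemma esq_add (q w : Config n d) : esq E (q + w) = esq E q + (2 : ℝ) • rig E q w + esq E w := by
  ext k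
  simp only [PiLp.add_apply, PiLp.smul_apply, esq_apply, rig_apply, edge_add, norm_add_sq_real,
    smul_eq_mul]

lemma esq_smul (c : ℝ) (v : Config n d) : esq E (c • v) = c ^ 2 • esq E v := by
  ext k
  simp only [PiLp.smul_apply, esq_apply, edge_smul, norm_smul, smul_eq_mul, mul_pow,
    Real.norm_eq_abs, sq_abs]

lemma stressForm_add_left (ω δ : EuclideanSpace ℝ (Fin m)) (v : Config n d) :
    stressForm E (ω + δ) v = stressForm E ω v + stressForm E δ v := by
  simp only [stressForm, PiLp.add_apply, add_mul, sum_add_distrib]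

lemma stressForm_smul_left (c : ℝ) (ω : EuclideanSpace ℝ (Fin m)) (v : Config n d) :
    stressForm E (c • ω) v = c * stressForm E ω v := by
  simp only [stressForm, PiLp.smul_apply, smul_eq_mul, mul_sum, mul_assoc]

lemma inner_esq (ω : EuclideanSpace ℝ (Fin m)) (v : Config n d) :
    ⟪ω, esq E v⟫_ℝ = stressForm E ω v := by
  simp [PiLp.inner_apply, stressForm, esq_apply, edge, mul_comm]

lemma stressForm_smul (ω : EuclideanSpace ℝ (Fin m)) (c : ℝ) (v : Config n d) :
    stressForm E ω (c • v) = c ^ 2 * stressForm E ω v := by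
  rw [← inner_esq, ← inner_esq, esq_smul, real_inner_smul_right]

lemma inner_rig (ω : EuclideanSpace ℝ (Fin m)) (q v : Config n d) :
    ⟪ω, rig E q v⟫_ℝ = ∑ k, ω k * ⟪edge E k q, edge E k v⟫_ℝ := by
  simp [PiLp.inner_apply, rig_apply, mul_comm]

lemma inner_stressGrad (ω : EuclideanSpace ℝ (Fin m)) (p v : Config n d) :
    ⟪stressGrad E ω p, v⟫_ℝ = ⟪ω, rig E p v⟫_ℝ := by
  have hblock : ∀ l, stressGrad E ω p l = ∑ k, (((if (E k).1 = l then (1 : ℝ) else 0) -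
      (if (E k).2 = l then (1 : ℝ) else 0)) * ω k) • edge E k p := fun _ => rfl
  rw [PiLp.inner_apply, inner_rig]
  simp only [hblock, sum_inner, real_inner_smul_left]
  rw [sum_comm]
  refine sum_congr rfl fun k _ => ?_
  simp only [sub_mul, ite_mul, one_mul, zero_mul, sum_sub_distrib, sum_ite_eq, mem_univ, if_true]
  rw [← mul_sub, ← inner_sub_right]
  rfl

def energy (E : Fin m → Fin n × Fin n) (κ : ℝ) (ω : EuclideanSpace ℝ (Fin m))
    (p q : Config n d) : ℝ :=
  κ / 4 * ‖esq E q - esq E p‖ ^ 2 + ⟪ω, esq E q - esq E p⟫_ℝ / 2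

def energyStress (E : Fin m → Fin n × Fin n) (κ : ℝ) (ω : EuclideanSpace ℝ (Fin m))
    (p q : Config n d) : EuclideanSpace ℝ (Fin m) :=
  κ • (esq E q - esq E p) + ω

variable {κ : ℝ} {ω : EuclideanSpace ℝ (Fin m)}

lemma hessianForm_smul (p : Config n d) (c : ℝ) (v : Config n d) :
    2 * κ * ‖rig E p (c • v)‖ ^ 2 + stressForm E ω (c • v)
      = c ^ 2 * (2 * κ * ‖rig E p v‖ ^ 2 + stressForm E ω v) := by
  rw [rig_smul_right, norm_smul, stressForm_smul, Real.norm_eq_abs, mul_pow, sq_abs]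
  ring

@[simp] lemma energy_self (p : Config n d) : energy E κ ω p p = 0 := by
  simp [energy]

@[simp] lemma energyStress_self (p : Config n d) : energyStress E κ ω p p = ω := by
  simp [energyStress]

lemma continuous_energy (p : Config n d) : Continuous (energy E κ ω p) := by
  unfold energy esq
  fun_prop

lemma energy_add (p w : Config n d) :
    energy E κ ω p (p + w) = κ / 4 * ‖(2 : ℝ) • rig E p w + esq E w‖ ^ 2
      + ⟪stressGrad E ω p, w⟫_ℝ + stressForm E ω w / 2 := by
  rw [energy, esq_add, add_assoc, add_sub_cancel_left, inner_add_right, real_inner_smul_right,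
    inner_stressGrad, inner_esq]
  ring

lemma hasDerivAt_energy_line (p q v : Config n d) :
    HasDerivAt (fun s : ℝ => energy E κ ω p (q + s • v))
      ⟪energyStress E κ ω p q, rig E q v⟫_ℝ 0 := by
  have hline : HasDerivAt (fun s : ℝ => esq E q - esq E p + ((2 * s) • rig E q v + s ^ 2 • esq E v))
      ((2 : ℝ) • rig E q v) 0 :=
    ((((hasDerivAt_id (0 : ℝ)).const_mul 2).smul_const (rig E q v)).add
      ((hasDerivAt_pow 2 (0 : ℝ)).smul_const (esq E v))).const_add _ |>.congr_deriv (by simp)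
  have hfun : (fun s : ℝ => energy E κ ω p (q + s • v)) = fun s : ℝ =>
      κ / 4 * ‖esq E q - esq E p + ((2 * s) • rig E q v + s ^ 2 • esq E v)‖ ^ 2 +
        ⟪esq E q - esq E p + ((2 * s) • rig E q v + s ^ 2 • esq E v), ω⟫_ℝ / 2 := by
    funext s
    rw [energy, esq_add, esq_smul, rig_smul_right, smul_smul, real_inner_comm ω]
    congr 4 <;> abel
  rw [hfun]
  refine ((hline.norm_sq.const_mul (κ / 4)).add
    ((hline.inner ℝ (hasDerivAt_const 0 ω)).div_const 2)).congr_deriv ?_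
  simp only [energyStress, mul_zero, zero_smul, add_zero, inner_zero_right, zero_add, pow_two]
  rw [real_inner_comm ω, inner_add_left, real_inner_smul_left, real_inner_smul_right,
    real_inner_smul_right]
  ring

lemma mul_energy_ge {z lam μ₀ t : ℝ} (hdeg : degBound E z) (hκ : 0 ≤ κ) (ht : 0 ≤ t)
    (ht1 : t ≤ 1) {p w : Config n d}
    (hlw : lam * ‖w‖ ^ 2 ≤ 2 * κ * ‖rig E p w‖ ^ 2 + stressForm E ω w)
    (hμw : μ₀ * ‖w‖ ^ 2 ≤ stressForm E ω w) :
    t / 2 * ((1 - t) * lam + t * μ₀) * ‖w‖ ^ 2 - t * ‖stressGrad E ω p‖ * ‖w‖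
      - κ * (1 - t) * z * ‖w‖ ^ 4 ≤ t * energy E κ ω p (p + w) := by
  have hyoung := mul_norm_add_sq_ge ((2 : ℝ) • rig E p w) (esq E w) t
  rw [norm_smul, mul_pow, Real.norm_two] at hyoung
  have hgrad : -(‖stressGrad E ω p‖ * ‖w‖) ≤ ⟪stressGrad E ω p, w⟫_ℝ :=
    neg_le_of_abs_le (abs_real_inner_le_norm _ _)
  rw [energy_add]
  linarith [mul_le_mul_of_nonneg_left hyoung hκ,
    mul_le_mul_of_nonneg_left (norm_esq_sq_le hdeg w) (mul_nonneg hκ (sub_nonneg.2 ht1)),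
    mul_le_mul_of_nonneg_left hlw (mul_nonneg ht (sub_nonneg.2 ht1)),
    mul_le_mul_of_nonneg_left hμw (sq_nonneg t), mul_le_mul_of_nonneg_left hgrad ht]

lemma energy_pos_of_norm_eq {z lam μ₀ L s η : ℝ} (hdeg : degBound E z) (hz : 0 < z)
    (hκ : 0 < κ) (hlam : 8 * z * κ * L ^ 2 = lam) (hμ₀ : μ₀ = lam * (1 - s ^ 2))
    (hs : 1 / 2 ≤ s ^ 2) (hs0 : 0 < s) (hL : 0 < L) (hη : 0 < η) (hηs : 2 * η * s < L)
    {p w : Config n d} (hg : ‖stressGrad E ω p‖ ≤ lam * η / 4) (hw : ‖w‖ = η)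
    (hlw : lam * ‖w‖ ^ 2 ≤ 2 * κ * ‖rig E p w‖ ^ 2 + stressForm E ω w)
    (hμw : μ₀ * ‖w‖ ^ 2 ≤ stressForm E ω w) :
    0 < energy E κ ω p (p + w) := by
  -- `t = η / (2 L s)` balances `t s²` against `η² / (L² t)` in the Young splitting
  obtain ⟨t, ht, rfl⟩ : ∃ t, 0 < t ∧ η = 2 * L * s * t :=
    ⟨η / (2 * L * s), by positivity, by field_simp⟩
  subst hμ₀ hlam
  have hst : 4 * s ^ 2 * t < 1 := by nlinarith
  have hbound := mul_energy_ge hdeg hκ.le ht.le (by nlinarith) hlw hμw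
  rw [hw] at hbound
  have hpoly : t / 2 * ((1 - t) * (8 * z * κ * L ^ 2) + t * (8 * z * κ * L ^ 2 * (1 - s ^ 2)))
      * (2 * L * s * t) ^ 2 - t * (8 * z * κ * L ^ 2 * (2 * L * s * t) / 4) * (2 * L * s * t)
      - κ * (1 - t) * z * (2 * L * s * t) ^ 4
      = 8 * z * κ * L ^ 4 * s ^ 2 * t ^ 3 * (1 - 4 * s ^ 2 * t + 2 * s ^ 2 * t ^ 2) := by ring
  have hpos : 0 < 8 * z * κ * L ^ 4 * s ^ 2 * t ^ 3 * (1 - 4 * s ^ 2 * t + 2 * s ^ 2 * t ^ 2) :=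
    mul_pos (by positivity) (by nlinarith [sq_nonneg (s * t)])
  have hgrad := mul_le_mul_of_nonneg_left hg (by positivity : 0 ≤ t * (2 * L * s * t))
  exact pos_of_mul_pos_right (by linarith) ht.le

lemma neg_le_esq_add_sub (q u : Config n d) (k : Fin m) :
    -(4 * ‖q‖ * ‖u‖) ≤ (esq E (q + u) - esq E q) k := by
  have hprod : ‖edge E k q‖ * ‖edge E k u‖ ≤ 2 * ‖q‖ * ‖u‖ := by
    refine (pow_le_pow_iff_left₀ (by positivity) (by positivity) two_ne_zero).1 ?_
    rw [mul_pow, mul_pow, mul_pow]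
    nlinarith [norm_edge_sq_le (E := E) q k, norm_edge_sq_le (E := E) u k, sq_nonneg ‖q‖,
      sq_nonneg ‖edge E k u‖]
  rw [esq_add, add_assoc, add_sub_cancel_left]
  simp only [PiLp.add_apply, PiLp.smul_apply, smul_eq_mul, esq_apply, rig_apply]
  nlinarith [neg_le_of_abs_le (abs_real_inner_le_norm (edge E k q) (edge E k u)),
    sq_nonneg ‖edge E k u‖]

lemma mul_hessian_ge {z lam μ₀ τ η : ℝ} (hdeg : degBound E z) (hz : 0 ≤ z) (hκ : 0 ≤ κ)
    (hτ : 0 ≤ τ) (hτ1 : τ ≤ 1) {p u v : Config n d} (hu : ‖u‖ ≤ η)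
    (hlv : lam * ‖v‖ ^ 2 ≤ 2 * κ * ‖rig E p v‖ ^ 2 + stressForm E ω v)
    (hμv : μ₀ * ‖v‖ ^ 2 ≤ stressForm E ω v) :
    (τ * (1 - τ) * lam + τ ^ 2 * μ₀ - 8 * κ * z * (1 - τ) * η ^ 2 - 8 * κ * z * τ * ‖p‖ * η)
        * ‖v‖ ^ 2
      ≤ τ * (2 * κ * ‖rig E (p + u) v‖ ^ 2 + stressForm E (energyStress E κ ω p (p + u)) v) := by
  have hη : 0 ≤ η := (norm_nonneg u).trans hu
  have hyoung := mul_norm_add_sq_ge (rig E p v) (rig E u v) τ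
  have hrig : ‖rig E u v‖ ^ 2 ≤ 4 * z * η ^ 2 * ‖v‖ ^ 2 := by
    refine (norm_rig_sq_le hdeg u v).trans ?_
    gcongr
  have hδ := neg_le_stressForm hdeg (by positivity : 0 ≤ 4 * ‖p‖ * η)
    (fun k => le_trans (by gcongr) (neg_le_esq_add_sub (E := E) p u k)) v
  rw [rig_add_left, energyStress, stressForm_add_left, stressForm_smul_left]
  linarith [mul_le_mul_of_nonneg_left hyoung hκ,
    mul_le_mul_of_nonneg_left hrig (mul_nonneg hκ (sub_nonneg.2 hτ1)),
    mul_le_mul_of_nonneg_left hδ (mul_nonneg hτ hκ),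
    mul_le_mul_of_nonneg_left hlv (mul_nonneg hτ (sub_nonneg.2 hτ1)),
    mul_le_mul_of_nonneg_left hμv (sq_nonneg τ)]

lemma hessian_pos {z lam μ₀ L s η : ℝ} (hdeg : degBound E z) (hz : 0 < z) (hκ : 0 < κ)
    (hlam : 8 * z * κ * L ^ 2 = lam) (hμ₀ : μ₀ = lam * (1 - s ^ 2)) (hs : 1 / 2 ≤ s ^ 2)
    (hs0 : 0 < s) (hL : 0 < L) {p u v : Config n d} (hkey : 2 * η * s * L + η * ‖p‖ < L ^ 2)
    (hu : ‖u‖ ≤ η) (hlv : lam * ‖v‖ ^ 2 ≤ 2 * κ * ‖rig E p v‖ ^ 2 + stressForm E ω v)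
    (hμv : μ₀ * ‖v‖ ^ 2 ≤ stressForm E ω v) (hv : v ≠ 0) :
    0 < 2 * κ * ‖rig E (p + u) v‖ ^ 2 + stressForm E (energyStress E κ ω p (p + u)) v := by
  have hv0 : 0 < ‖v‖ := norm_pos_iff.2 hv
  rcases ((norm_nonneg u).trans hu).eq_or_lt with rfl | hη
  · rw [norm_le_zero_iff.1 hu, add_zero, energyStress_self]
    exact lt_of_lt_of_le (by rw [← hlam]; positivity) hlv
  -- `τ = η / (L s)` balances `τ s²` against `η² / (L² τ)` in the Young splitting
  obtain ⟨τ, hτ, rfl⟩ : ∃ τ, 0 < τ ∧ η = L * s * τ := ⟨η / (L * s), by positivity, by field_simp⟩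
  subst hμ₀ hlam
  have hgap : 0 < L - 2 * τ * L * s ^ 2 - τ * ‖p‖ * s := by nlinarith
  have hτ1 : τ ≤ 1 := by
    nlinarith [mul_nonneg (mul_nonneg hτ.le (norm_nonneg p)) hs0.le,
      mul_le_mul_of_nonneg_left hs (by positivity : 0 ≤ 2 * τ * L)]
  have hbound := mul_hessian_ge hdeg hz.le hκ.le hτ.le hτ1 hu hlv hμv
  have hpoly : τ * (1 - τ) * (8 * z * κ * L ^ 2) + τ ^ 2 * (8 * z * κ * L ^ 2 * (1 - s ^ 2))
      - 8 * κ * z * (1 - τ) * (L * s * τ) ^ 2 - 8 * κ * z * τ * ‖p‖ * (L * s * τ)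
      = 8 * z * κ * τ * L * (L - 2 * τ * L * s ^ 2 + τ ^ 2 * L * s ^ 2 - τ * ‖p‖ * s) := by ring
  rw [hpoly] at hbound
  have hpos : 0 < 8 * z * κ * τ * L * (L - 2 * τ * L * s ^ 2 + τ ^ 2 * L * s ^ 2 - τ * ‖p‖ * s)
      * ‖v‖ ^ 2 := by
    have : 0 < L - 2 * τ * L * s ^ 2 + τ ^ 2 * L * s ^ 2 - τ * ‖p‖ * s := by
      nlinarith [mul_pos (mul_pos (pow_pos hτ 2) hL) (pow_pos hs0 2)]
    exact mul_pos (mul_pos (by positivity) this) (pow_pos hv0 2)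
  exact pos_of_mul_pos_right (hpos.trans_le hbound) hτ.le

lemma exists_critical_point {C : Submodule ℝ (Config n d)} {z lam μ₀ L s η : ℝ}
    (hdeg : degBound E z) (hz : 0 < z) (hκ : 0 < κ) (hlam : 8 * z * κ * L ^ 2 = lam)
    (hμ₀ : μ₀ = lam * (1 - s ^ 2)) (hs : 1 / 2 ≤ s ^ 2) (hs0 : 0 < s) (hL : 0 < L)
    (hη : 0 ≤ η) (hηs : 2 * η * s < L) {p : Config n d}
    (hg : ‖stressGrad E ω p‖ ≤ lam * η / 4)
    (hlw : ∀ w ∈ C, lam * ‖w‖ ^ 2 ≤ 2 * κ * ‖rig E p w‖ ^ 2 + stressForm E ω w)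
    (hμw : ∀ w ∈ C, μ₀ * ‖w‖ ^ 2 ≤ stressForm E ω w) :
    ∃ u ∈ C, ‖u‖ ≤ η ∧ ∀ v ∈ C, ⟪energyStress E κ ω p (p + u), rig E (p + u) v⟫_ℝ = 0 := by
  rcases hη.eq_or_lt with rfl | hη
  · have hg0 : stressGrad E ω p = 0 := norm_le_zero_iff.1 (by simpa using hg)
    refine ⟨0, C.zero_mem, norm_zero.le, fun v _ => ?_⟩
    rw [add_zero, energyStress_self, ← inner_stressGrad, hg0, inner_zero_left]
  obtain ⟨u, huC, hu, hmin⟩ := C.exists_norm_lt_isMinOn (G := fun w => energy E κ ω p (p + w))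
    ((continuous_energy p).comp (continuous_const_add p)) hη.le fun w hwC hw => by
      simpa using energy_pos_of_norm_eq hdeg hz hκ hlam hμ₀ hs hs0 hL hη hηs hg hw
        (hlw w hwC) (hμw w hwC)
  refine ⟨u, huC, hu.le, fun v hv => (hmin.isLocalMin_line huC hu hv).hasDerivAt_eq_zero ?_⟩
  simpa only [add_assoc] using hasDerivAt_energy_line p (p + u) v

end Framework

open Framework in
theorem nearby_prestress_stable_general {n d m : ℕ} (E : Fin m → Fin n × Fin n)
    (p : Config n d) (C : Submodule ℝ (Config n d))
    (z κ lam μ₀ : ℝ) (ω : EuclideanSpace ℝ (Fin m))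
    (hz : 1 ≤ z) (hdeg : degBound E z)
    (hκ : 0 < κ) (hlam : 0 < lam) (hμ₀ : μ₀ ≤ lam / 2)
    (hlower : ∀ v ∈ C, ‖v‖ = 1 → lam ≤ 2 * κ * ‖rig E p v‖ ^ 2 + stressForm E ω v)
    (hμlower : ∀ v ∈ C, ‖v‖ = 1 → μ₀ ≤ stressForm E ω v)
    (L μbar η₁ Dpss : ℝ)
    (hL : L = Real.sqrt (lam / (8 * z * κ)))
    (hμbar : μbar = 1 - μ₀ / lam)
    (hη₁ : η₁ = 4 * ‖stressGrad E ω p‖ / lam)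
    (hDpss : Dpss = (η₁ / L) * (Real.sqrt μbar + (3 / 2) * (η₁ / L) + (1 / 2) * (‖p‖ / L)))
    (hDlt : Dpss < 1 / 2) :
    ∃ p' : Config n d, ∃ ω' : EuclideanSpace ℝ (Fin m),
      (∀ k, ω' k = κ * (‖p' (E k).1 - p' (E k).2‖ ^ 2 - ‖p (E k).1 - p (E k).2‖ ^ 2) + ω k) ∧
      p' - p ∈ C ∧ ‖p' - p‖ ≤ η₁ ∧
      (∀ v ∈ C, ∑ k, ω' k * ⟪p' (E k).1 - p' (E k).2, v (E k).1 - v (E k).2⟫_ℝ = 0) ∧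
      (∀ v ∈ C, v ≠ 0 → 0 < 2 * κ * ‖rig E p' v‖ ^ 2 + stressForm E ω' v) ∧
      (∀ v ∈ C, v ≠ 0 → rig E p' v = 0 → 0 < stressForm E ω' v) := by
  have hz0 : 0 < z := by linarith
  obtain ⟨hL0, hLsq⟩ := pos_and_eight_mul_sq_eq hz0 hκ hlam hL
  obtain ⟨hs0, hs, hμ₀s⟩ := sqrt_pos_and_eq_mul_one_sub_sq hlam hμ₀ hμbar
  have hη0 : 0 ≤ η₁ := hη₁ ▸ by positivity
  have hg : ‖stressGrad E ω p‖ = lam * η₁ / 4 := by rw [hη₁]; field_simp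
  have hkey := add_lt_sq_of_mul_lt_half hL0 (hDpss ▸ hDlt)
  have hηs : 2 * η₁ * Real.sqrt μbar < L := by nlinarith [mul_nonneg hη0 (norm_nonneg p)]
  have hlw := fun v (hv : v ∈ C) => mul_norm_sq_le_of_norm_eq_one (hessianForm_smul p) hlower hv
  have hμw := fun v (hv : v ∈ C) => mul_norm_sq_le_of_norm_eq_one (stressForm_smul ω) hμlower hv
  obtain ⟨u, huC, hu, hcrit⟩ := exists_critical_point hdeg hz0 hκ hLsq hμ₀s hs hs0 hL0 hη0 hηs
    hg.le hlw hμw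
  have hpos := fun v hv hv0 => hessian_pos hdeg hz0 hκ hLsq hμ₀s hs hs0 hL0 hkey hu
    (hlw v hv) (hμw v hv) hv0
  refine ⟨p + u, energyStress E κ ω p (p + u), fun k => rfl, by simpa using huC,
    by simpa using hu, fun v hv => (inner_rig _ _ _).symm.trans (hcrit v hv), hpos,
    fun v hv hv0 hR => by simpa [hR] using hpos v hv hv0⟩

/-- **Theorem 4 (Nearby prestress stable framework).** Under the framework setup with
`D_pss < 1/2`, there is `p' ∈ 𝒞^p` with `|p'−p| ≤ η₁` such that for the stress
`ω'_{ij} = κ(|p'_i−p'_j|² − |p_i−p_j|²) + ω_{ij}` the energy gradient vanishes on `𝒞` at `p'`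
and the energy Hessian `2κ|R(p')v|² + Ω_{ω'}(v)` is positive definite on `𝒞`; in particular
every nonzero `v ∈ 𝒞` with `R(p')v = 0` has `Ω_{ω'}(v) > 0`, so `p'` is prestress stable. -/
theorem nearby_prestress_stable {n d m : ℕ} (E : Fin m → Fin n × Fin n) (hm : 0 < m)
    (hE : ∀ k, (E k).1 ≠ (E k).2)
    (p : Config n d) (C : Submodule ℝ (Config n d))
    (z κ lam μ₀ : ℝ) (ω : EuclideanSpace ℝ (Fin m))
    (hz : 1 ≤ z) (hdeg : degBound E z)
    (hκ : 0 < κ) (hlam : 0 < lam) (hμ₀ : μ₀ ≤ lam / 2)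
    (hlower : ∀ v ∈ C, ‖v‖ = 1 → lam ≤ 2 * κ * ‖rig E p v‖ ^ 2 + stressForm E ω v)
    (hμlower : ∀ v ∈ C, ‖v‖ = 1 → μ₀ ≤ stressForm E ω v)
    (L μbar η₁ Dpss : ℝ)
    (hL : L = Real.sqrt (lam / (8 * z * κ)))
    (hμbar : μbar = 1 - μ₀ / lam)
    (hη₁ : η₁ = 4 * ‖stressGrad E ω p‖ / lam)
    (hDpss : Dpss = (η₁ / L) * (Real.sqrt μbar + (3 / 2) * (η₁ / L) + (1 / 2) * (‖p‖ / L)))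
    (hDlt : Dpss < 1 / 2) :
    ∃ p' : Config n d, ∃ ω' : EuclideanSpace ℝ (Fin m),
      (∀ k, ω' k = κ * (‖p' (E k).1 - p' (E k).2‖ ^ 2 - ‖p (E k).1 - p (E k).2‖ ^ 2) + ω k) ∧
      p' - p ∈ C ∧ ‖p' - p‖ ≤ η₁ ∧
      (∀ v ∈ C, ∑ k, ω' k * ⟪p' (E k).1 - p' (E k).2, v (E k).1 - v (E k).2⟫_ℝ = 0) ∧
      (∀ v ∈ C, v ≠ 0 → 0 < 2 * κ * ‖rig E p' v‖ ^ 2 + stressForm E ω' v) ∧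
      (∀ v ∈ C, v ≠ 0 → rig E p' v = 0 → 0 < stressForm E ω' v) :=
  nearby_prestress_stable_general E p C z κ lam μ₀ ω hz hdeg hκ hlam hμ₀ hlower hμlower L μbar η₁
    Dpss hL hμbar hη₁ hDpss hDlt
end
end

section
/- (Positivity interval of a cubic under varying cubic coefficient, Lemma 5.1.) Let b > 0 and c ≠ 0 be reals, let g(t,a) = a t³ + b t² + c t, and set t_* = 2|c|/b. Let ā be a real with 0 < ā < b²/(4|c|) and set t₁⁺(ā) = (b/(2ā))(1 + √(1 − 4ā|c|/b²)). Then t_* < t₁⁺(ā) (so the interval [t_*, t₁⁺(ā)) is nonempty), and g(t,a) > 0 for all reals t, a with t_* ≤ |t| < t₁⁺(ā) and |a| ≤ ā. -/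
/-- **Lemma 5.1 (Positivity interval of a cubic under varying cubic coefficient).**
For `b > 0`, `c ≠ 0`, `0 < ā < b²/(4|c|)`, set `t_* = 2|c|/b` and
`t₁⁺(ā) = (b/(2ā))(1 + √(1 − 4ā|c|/b²))`. Then `t_* < t₁⁺(ā)`, and
`a t³ + b t² + c t > 0` whenever `t_* ≤ |t| < t₁⁺(ā)` and `|a| ≤ ā`. -/
theorem cubic_positivity_interval (b c abar : ℝ) (hb : 0 < b) (hc : c ≠ 0)
    (habar : 0 < abar) (habar' : abar < b ^ 2 / (4 * |c|)) :
    2 * |c| / b < (b / (2 * abar)) * (1 + Real.sqrt (1 - 4 * abar * |c| / b ^ 2)) ∧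
    ∀ t a : ℝ, 2 * |c| / b ≤ |t| →
      |t| < (b / (2 * abar)) * (1 + Real.sqrt (1 - 4 * abar * |c| / b ^ 2)) →
      |a| ≤ abar → 0 < a * t ^ 3 + b * t ^ 2 + c * t := by
  have hcpos : 0 < |c| := abs_pos.mpr hc
  have hb2 : (0:ℝ) < b ^ 2 := by positivity
  have hlt : 4 * abar * |c| < b ^ 2 := by
    rw [lt_div_iff₀ (by positivity)] at habar'
    nlinarith
  have hDpos : 0 < 1 - 4 * abar * |c| / b ^ 2 := by
    have : 4 * abar * |c| / b ^ 2 < 1 := (div_lt_one hb2).mpr hlt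
    linarith
  set r := Real.sqrt (1 - 4 * abar * |c| / b ^ 2) with hrdef
  have hrpos : 0 < r := Real.sqrt_pos.mpr hDpos
  have hr2 : r ^ 2 = 1 - 4 * abar * |c| / b ^ 2 := Real.sq_sqrt hDpos.le
  have hr2' : b ^ 2 * r ^ 2 = b ^ 2 - 4 * abar * |c| := by
    rw [hr2]; field_simp
  have hr1 : r < 1 := by nlinarith [hr2', sq_nonneg (r - 1), mul_pos hcpos habar]
  constructor
  · have h1 : 2 * |c| / b < b / (2 * abar) := by
      rw [div_lt_div_iff₀ hb (by positivity)]
      nlinarith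
    have h2 : b / (2 * abar) < b / (2 * abar) * (1 + r) := by
      have hpos : 0 < b / (2 * abar) := by positivity
      nlinarith
    linarith
  · intro t a ht1 ht2 ha
    have hs : 0 < |t| := lt_of_lt_of_le (by positivity) ht1
    set s := |t| with hsdef
    have hlow : (b / (2 * abar)) * (1 - r) < 2 * |c| / b := by
      rw [div_mul_eq_mul_div, div_lt_div_iff₀ (by positivity) hb]
      nlinarith
    have hu : 0 < b * (1 + r) - s * (2 * abar) := by
      rw [div_mul_eq_mul_div, lt_div_iff₀ (by positivity)] at ht2
      linarith
    have hv : 0 < s * (2 * abar) - b * (1 - r) := by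
      have h' : (b / (2 * abar)) * (1 - r) < s := lt_of_lt_of_le hlow ht1
      rw [div_mul_eq_mul_div, div_lt_iff₀ (by positivity)] at h'
      linarith
    have key : 0 < b * s - abar * s ^ 2 - |c| := by
      nlinarith [mul_pos hu hv, hr2', habar]
    have h3 : -(abar * s ^ 3) ≤ a * t ^ 3 := by
      have h := neg_abs_le (a * t ^ 3)
      have habs : |a * t ^ 3| = |a| * s ^ 3 := by
        rw [abs_mul, abs_pow]
      have hle : |a| * s ^ 3 ≤ abar * s ^ 3 :=
        mul_le_mul_of_nonneg_right ha (by positivity)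
      calc -(abar * s ^ 3) ≤ -(|a| * s ^ 3) := by linarith
        _ = -|a * t ^ 3| := by rw [habs]
        _ ≤ a * t ^ 3 := h
    have h4 : -(|c| * s) ≤ c * t := by
      have h := neg_abs_le (c * t)
      have habs : |c * t| = |c| * s := abs_mul c t
      linarith [habs ▸ h]
    have hts : s ^ 2 = t ^ 2 := sq_abs t
    nlinarith [mul_pos hs key]
end

section
/- (Sharper interval from the proof of Lemma 5.1.) Let b > 0, c > 0 and 0 < ā < b²/(4c). Define t₁(ā) = (−b − √(b² − 4āc))/(2ā) and t₂(ā) = (−b + √(b² − 4āc))/(2ā) (both are negative). Then a t³ + b t² + c t > 0 for all reals t, a with |t₂(ā)| < |t| < |t₁(ā)| and |a| ≤ ā. -/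
set_option maxHeartbeats 1000000 in
/-- **Sharper interval from the proof of Lemma 5.1.** For `b > 0`, `c > 0`,
`0 < ā < b²/(4c)`, the two nonzero roots `t₁(ā) = (−b − √(b²−4āc))/(2ā)` and
`t₂(ā) = (−b + √(b²−4āc))/(2ā)` of `ā t³ + b t² + c t` are both negative, and
`a t³ + b t² + c t > 0` whenever `|t₂(ā)| < |t| < |t₁(ā)|` and `|a| ≤ ā`. -/
theorem cubic_positivity_sharp (b c abar : ℝ) (hb : 0 < b) (hc : 0 < c)
    (habar : 0 < abar) (habar' : abar < b ^ 2 / (4 * c)) :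
    (-b - Real.sqrt (b ^ 2 - 4 * abar * c)) / (2 * abar) < 0 ∧
    (-b + Real.sqrt (b ^ 2 - 4 * abar * c)) / (2 * abar) < 0 ∧
    ∀ t a : ℝ,
      |(-b + Real.sqrt (b ^ 2 - 4 * abar * c)) / (2 * abar)| < |t| →
      |t| < |(-b - Real.sqrt (b ^ 2 - 4 * abar * c)) / (2 * abar)| →
      |a| ≤ abar → 0 < a * t ^ 3 + b * t ^ 2 + c * t := by
  have h4c : 0 < 4 * c := by linarith
  have hD : 0 < b ^ 2 - 4 * abar * c := by
    have := (lt_div_iff₀ h4c).mp habar'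
    nlinarith
  set s := Real.sqrt (b ^ 2 - 4 * abar * c) with hs
  have hs2 : s ^ 2 = b ^ 2 - 4 * abar * c := Real.sq_sqrt hD.le
  have hs0 : 0 < s := Real.sqrt_pos.2 hD
  have hsb : s < b := by nlinarith [mul_pos habar hc]
  have h2a : 0 < 2 * abar := by linarith
  have ht1 : (-b - s) / (2 * abar) < 0 :=
    div_neg_of_neg_of_pos (by linarith) h2a
  have ht2 : (-b + s) / (2 * abar) < 0 :=
    div_neg_of_neg_of_pos (by linarith) h2a
  refine ⟨ht1, ht2, fun t a h1 h2 ha => ?_⟩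
  rw [abs_of_neg ht2] at h1
  rw [abs_of_neg ht1] at h2
  have e1 : -((-b + s) / (2 * abar)) = (b - s) / (2 * abar) := by ring
  have e2 : -((-b - s) / (2 * abar)) = (b + s) / (2 * abar) := by ring
  rw [e1] at h1
  rw [e2] at h2
  have h1' : b - s < |t| * (2 * abar) := (div_lt_iff₀ h2a).mp h1
  have h2' : |t| * (2 * abar) < b + s := (lt_div_iff₀ h2a).mp h2
  obtain ⟨haL, haR⟩ := abs_le.mp ha
  rcases abs_cases t with ⟨he, hpos⟩ | ⟨he, hneg⟩
  · rw [he] at h1' h2'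
    have ht : 0 < t := by nlinarith
    have hA : 0 < t * ((b + s - 2 * abar * t) * (2 * abar * t)) := by
      apply mul_pos ht
      apply mul_pos (by nlinarith) (by nlinarith)
    have hB : 0 < t * ((b - s) * (2 * abar * t + b + s)) := by
      apply mul_pos ht
      apply mul_pos (by nlinarith) (by nlinarith)
    have hC : 0 ≤ (a + abar) * t ^ 3 :=
      mul_nonneg (by linarith) (by positivity)
    have key : 4 * abar * (a * t ^ 3 + b * t ^ 2 + c * t) =
        4 * abar * ((a + abar) * t ^ 3) +
        t * ((b + s - 2 * abar * t) * (2 * abar * t)) +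
        t * ((b - s) * (2 * abar * t + b + s)) +
        t * (4 * abar * c - b ^ 2 + s ^ 2) := by ring
    rw [hs2] at key
    have hpos4 : 0 < 4 * abar * (a * t ^ 3 + b * t ^ 2 + c * t) := by
      rw [key]; have : (4 * abar * c - b ^ 2 + (b ^ 2 - 4 * abar * c)) = 0 := by ring
      rw [this]
      linarith [mul_nonneg (by linarith : (0:ℝ) ≤ 4 * abar) hC]
    have h4a : (0:ℝ) < 4 * abar := by linarith
    linarith [(mul_pos_iff_of_pos_left h4a).mp hpos4]
  · rw [he] at h1' h2'
    have hprod : (-2 * abar * t - b - s) * (-2 * abar * t - b + s) < 0 := by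
      exact mul_neg_of_neg_of_pos (by linarith) (by linarith)
    have hP : 0 < t * ((-2 * abar * t - b - s) * (-2 * abar * t - b + s)) :=
      mul_pos_of_neg_of_neg hneg hprod
    have hC : (abar - a) * t ^ 3 ≤ 0 :=
      mul_nonpos_of_nonneg_of_nonpos (by linarith) (by nlinarith [sq_nonneg t])
    have key : 4 * abar * (abar * t ^ 3 + b * t ^ 2 + c * t) =
        t * ((-2 * abar * t - b - s) * (-2 * abar * t - b + s)) +
        t * (4 * abar * c - b ^ 2 + s ^ 2) := by ring
    rw [hs2] at key
    have hpos4 : 0 < 4 * abar * (abar * t ^ 3 + b * t ^ 2 + c * t) := by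
      rw [key]; have : (4 * abar * c - b ^ 2 + (b ^ 2 - 4 * abar * c)) = 0 := by ring
      rw [this]; linarith
    have h4a : (0:ℝ) < 4 * abar := by linarith
    have hE := (mul_pos_iff_of_pos_left h4a).mp hpos4
    linarith [hC]
end

section
/- (Confinement near an almost-critical point, Proposition 1.) Assume the C³ setting. Suppose the weak discriminant condition holds in the ball of radius η₁*: for every unit vector v and every real s with |s| ≤ η₁*, |H'|_p(v)|·|H'''|_{p+sv}(v)| < (3/8)(H''|_p(v))². Then every continuous path q : [0,1] → ℝⁿ with q(0) = p and H(q(t)) ≤ H(p) for all t satisfies |q(t) − p| ≤ η₁* for all t ∈ [0,1]. -/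
/-!
Along a ray `s ↦ p + s v`, Taylor's formula gives `H(p + s v) - H(p) ≥ s (b s - |c| - ā s²)` for
`0 < s ≤ r`. The weak discriminant condition `|c| ā < b² / 4` makes this quadratic positive at its
vertex `b / (2ā)`; if moreover `2|c| ≤ b r`, i.e. `r ≥ η₁*`, it is also positive at
`m(v) = min (r, b / (2ā))`. Hence `H > H(p)` on the star-shaped surface `{p + m(v) v}`, which
depends continuously on `v` and lies in the closed ball of radius `r`, so a connected subset of
`{H ≤ H(p)}` containing `p` cannot leave that ball.
-/

noncomputable section

/-- The `k`-th directional derivative `H^{(k)}|_q(v) = (d/dt)^k H(q + t v)` at `t = 0`. -/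
def dirDeriv {E : Type*} [NormedAddCommGroup E] [NormedSpace ℝ E]
    (H : E → ℝ) (k : ℕ) (q v : E) : ℝ :=
  iteratedDeriv k (fun t : ℝ => H (q + t • v)) 0

/-- `ā(v,r) = max_{|s| ≤ r} (1/6)|H'''|_{p+sv}(v)|`. -/
def thirdDerivMax {E : Type*} [NormedAddCommGroup E] [NormedSpace ℝ E]
    (H : E → ℝ) (p : E) (v : E) (r : ℝ) : ℝ :=
  sSup ((fun s : ℝ => (1 / 6) * |dirDeriv H 3 (p + s • v) v|) '' Set.Icc (-r) r)

open Set Metric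

variable {E : Type*} [NormedAddCommGroup E] [NormedSpace ℝ E] {H : E → ℝ}

theorem dirDeriv_add_smul (H : E → ℝ) (k : ℕ) (x v : E) (s : ℝ) :
    dirDeriv H k (x + s • v) v = iteratedDeriv k (fun t : ℝ => H (x + t • v)) s := by
  have := iteratedDeriv_comp_const_add k (fun t : ℝ => H (x + t • v)) s
  simp only [add_smul, ← add_assoc] at this
  simpa [dirDeriv] using congrFun this 0

theorem dirDeriv_eq_iteratedFDeriv {n : WithTop ℕ∞} (hH : ContDiff ℝ n H) {k : ℕ}
    (hk : k ≤ n) (x v : E) :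
    dirDeriv H k x v = iteratedFDeriv ℝ k H x (fun _ => v) := by
  have hline : (fun t : ℝ => H (x + t • v))
      = (fun y => H (x + y)) ∘ ContinuousLinearMap.smulRight (1 : ℝ →L[ℝ] ℝ) v := by
    ext t; simp
  have hshift : ContDiff ℝ n (fun y => H (x + y)) := hH.comp (contDiff_const.add contDiff_id)
  rw [dirDeriv, iteratedDeriv_eq_iteratedFDeriv, hline,
    ContinuousLinearMap.iteratedFDeriv_comp_right _ hshift _ hk]
  simp [iteratedFDeriv_comp_add_left]

theorem continuous_dirDeriv_add_smul {n : WithTop ℕ∞} (hH : ContDiff ℝ n H) {k : ℕ}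
    (hk : k ≤ n) (p : E) :
    Continuous fun vs : E × ℝ => dirDeriv H k (p + vs.2 • vs.1) vs.1 := by
  simp_rw [dirDeriv_eq_iteratedFDeriv hH hk]
  have hpoint : Continuous fun vs : E × ℝ => p + vs.2 • vs.1 := by fun_prop
  exact ((hH.continuous_iteratedFDeriv hk).comp hpoint).eval
    (continuous_pi fun _ => continuous_fst)

theorem continuous_dirDeriv {n : WithTop ℕ∞} (hH : ContDiff ℝ n H) {k : ℕ} (hk : k ≤ n)
    (p : E) : Continuous fun v => dirDeriv H k p v := by
  have := (continuous_dirDeriv_add_smul hH hk p).comp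
    (continuous_id.prodMk (continuous_const (y := (0 : ℝ))))
  simpa [Function.comp_def] using this

theorem exists_dirDeriv_taylor (hH : ContDiff ℝ 3 H) (p v : E) {s : ℝ} (hs : s ≠ 0) :
    ∃ ξ ∈ uIoo 0 s, H (p + s • v) = H p + dirDeriv H 1 p v * s
      + (1 / 2) * dirDeriv H 2 p v * s ^ 2 + (1 / 6) * dirDeriv H 3 (p + ξ • v) v * s ^ 3 := by
  have hline : ContDiff ℝ 3 fun t : ℝ => H (p + t • v) := hH.comp (by fun_prop)
  obtain ⟨ξ, hξ, htaylor⟩ :=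
    taylor_mean_remainder_lagrange_iteratedDeriv (n := 2) hs.symm hline.contDiffOn
  have hderiv (k : ℕ) (hk : k ≤ 3) : iteratedDerivWithin k (fun t : ℝ => H (p + t • v))
      (uIcc 0 s) 0 = dirDeriv H k p v :=
    iteratedDerivWithin_eq_iteratedDeriv (uniqueDiffOn_uIcc hs.symm)
      (hline.contDiffAt.of_le (by exact_mod_cast hk)) left_mem_uIcc
  have hvalue : dirDeriv H 0 p v = H p := by simp [dirDeriv]
  refine ⟨ξ, hξ, ?_⟩
  rw [taylor_within_apply, Finset.sum_range_succ, Finset.sum_range_succ, Finset.sum_range_one,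
    hderiv 0 (by norm_num), hderiv 1 (by norm_num), hderiv 2 (by norm_num), hvalue,
    ← dirDeriv_add_smul] at htaylor
  norm_num [Nat.factorial] at htaylor
  linarith

section thirdDerivMax

variable (hH : ContDiff ℝ 3 H) (p : E)
include hH

theorem continuous_thirdDerivMax (r : ℝ) : Continuous fun v => thirdDerivMax H p v r :=
  isCompact_Icc.continuous_sSup
    (continuous_const.mul (continuous_dirDeriv_add_smul hH le_rfl p).abs)

theorem le_thirdDerivMax {v : E} {r s : ℝ} (hs : |s| ≤ r) :
    (1 / 6) * |dirDeriv H 3 (p + s • v) v| ≤ thirdDerivMax H p v r := by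
  have hcont : Continuous fun s : ℝ => (1 / 6) * |dirDeriv H 3 (p + s • v) v| :=
    continuous_const.mul ((continuous_dirDeriv_add_smul hH le_rfl p).comp
      (f := fun s : ℝ => (v, s)) (by fun_prop)).abs
  exact le_csSup (isCompact_Icc.image hcont).bddAbove (mem_image_of_mem _ (abs_le.1 hs))

theorem exists_eq_thirdDerivMax (v : E) {r : ℝ} (hr : 0 ≤ r) :
    ∃ s, |s| ≤ r ∧ thirdDerivMax H p v r = (1 / 6) * |dirDeriv H 3 (p + s • v) v| := by
  have hcont : Continuous fun s : ℝ => (1 / 6) * |dirDeriv H 3 (p + s • v) v| :=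
    continuous_const.mul ((continuous_dirDeriv_add_smul hH le_rfl p).comp
      (f := fun s : ℝ => (v, s)) (by fun_prop)).abs
  unfold thirdDerivMax
  obtain ⟨s, hs, hmax⟩ := (isCompact_Icc.image hcont).sSup_mem
    ((nonempty_Icc.2 (neg_le_self hr)).image _)
  exact ⟨s, abs_le.2 hs, hmax.symm⟩

theorem taylor_sub_thirdDerivMax_le (v : E) {r s : ℝ} (hs : |s| ≤ r) :
    H p + dirDeriv H 1 p v * s + (1 / 2) * dirDeriv H 2 p v * s ^ 2
      - thirdDerivMax H p v r * |s| ^ 3 ≤ H (p + s • v) := by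
  rcases eq_or_ne s 0 with rfl | hs0
  · have := (abs_nonneg _).trans hs
    simp
  obtain ⟨ξ, hξ, htaylor⟩ := exists_dirDeriv_taylor hH p v hs0
  have hξ : |ξ| ≤ r := by
    simpa using (abs_sub_left_of_mem_uIcc (uIoo_subset_uIcc_self hξ)).trans (by simpa using hs)
  have hrem :
      -(thirdDerivMax H p v r * |s| ^ 3) ≤ (1 / 6) * dirDeriv H 3 (p + ξ • v) v * s ^ 3 := by
    have habs : |(1 / 6) * dirDeriv H 3 (p + ξ • v) v * s ^ 3|
        = (1 / 6) * |dirDeriv H 3 (p + ξ • v) v| * |s| ^ 3 := by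
      rw [abs_mul, abs_mul, abs_pow, abs_of_pos (by norm_num : (0 : ℝ) < 1 / 6)]
    have := mul_le_mul_of_nonneg_right (le_thirdDerivMax hH p (v := v) hξ)
      (pow_nonneg (abs_nonneg s) 3)
    linarith [neg_abs_le ((1 / 6) * dirDeriv H 3 (p + ξ • v) v * s ^ 3)]
  linarith

end thirdDerivMax

-- The vertex `b / (2a)` of `s ↦ b s - a s²`, capped at `r`; the `max` avoids dividing by `a`.
def barrierRadius (a b r : ℝ) : ℝ := b / (2 * max a (b / (2 * r)))

section barrierRadius

variable {a b c r : ℝ}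

theorem barrierRadius_pos (hb : 0 < b) (hr : 0 < r) : 0 < barrierRadius a b r := by
  have : 0 < max a (b / (2 * r)) := (by positivity : 0 < b / (2 * r)).trans_le (le_max_right _ _)
  unfold barrierRadius
  positivity

theorem barrierRadius_le (hb : 0 < b) (hr : 0 < r) : barrierRadius a b r ≤ r := by
  have hcap : b / (2 * r) ≤ max a (b / (2 * r)) := le_max_right _ _
  have hpos : 0 < b / (2 * r) := by positivity
  rw [barrierRadius, div_le_iff₀ (by linarith)]
  rw [div_le_iff₀ (by positivity)] at hcap
  nlinarith

theorem barrierRadius_quadratic_pos (hb : 0 < b) (hr : 0 < r) (hcr : 2 * c ≤ b * r)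
    (hdisc : c * a < b ^ 2 / 4) :
    0 < b * barrierRadius a b r - c - a * barrierRadius a b r ^ 2 := by
  rcases le_total a (b / (2 * r)) with hle | hle
  · have hm : barrierRadius a b r = r := by
      rw [barrierRadius, max_eq_right hle]
      field_simp
    have har : 2 * r * a ≤ b := by rwa [le_div_iff₀ (by positivity), mul_comm] at hle
    rw [hm]
    nlinarith [mul_nonneg (sub_nonneg.2 hcr) (sub_nonneg.2 har), mul_lt_mul_of_pos_right hdisc hr]
  · have ha : 0 < a := (by positivity : 0 < b / (2 * r)).trans_le hle
    have hm : barrierRadius a b r = b / (2 * a) := by rw [barrierRadius, max_eq_left hle]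
    have hvertex : b * (b / (2 * a)) - c - a * (b / (2 * a)) ^ 2 = (b ^ 2 / 4 - c * a) / a := by
      field_simp
      ring
    rw [hm, hvertex]
    exact div_pos (by linarith) ha

theorem ContinuousOn.barrierRadius {X : Type*} [TopologicalSpace X] {a b : X → ℝ} {s : Set X}
    (ha : ContinuousOn a s) (hb : ContinuousOn b s) (hb_pos : ∀ x ∈ s, 0 < b x) (hr : 0 < r) :
    ContinuousOn (fun x => barrierRadius (a x) (b x) r) s := by
  refine hb.div (continuousOn_const.mul (ha.sup (hb.div_const _))) fun x hx => ?_
  have : 0 < b x / (2 * r) := div_pos (hb_pos x hx) (by positivity)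
  exact (mul_pos two_pos (this.trans_le (le_max_right _ _))).ne'

end barrierRadius

theorem inv_norm_sub_smul_sub_mem_sphere {x p : E} (hx : x ≠ p) :
    ‖x - p‖⁻¹ • (x - p) ∈ sphere (0 : E) 1 := by
  simpa using norm_smul_inv_norm (𝕜 := ℝ) (sub_ne_zero.2 hx)

theorem continuousOn_inv_norm_sub_smul_sub (p : E) :
    ContinuousOn (fun x => ‖x - p‖⁻¹ • (x - p)) {p}ᶜ :=
  ((continuous_id.sub continuous_const).norm.continuousOn.inv₀ fun _ hx =>
    norm_ne_zero_iff.2 (sub_ne_zero.2 hx)).smul (continuous_id.sub continuous_const).continuousOn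

theorem IsPreconnected.norm_sub_lt_of_barrier [ProperSpace E] {S : Set E} {p : E}
    {m : E → ℝ} (hS : IsPreconnected S) (hpS : p ∈ S) (hm : ContinuousOn m (sphere 0 1))
    (hm_pos : ∀ v ∈ sphere (0 : E) 1, 0 < m v) (hbarrier : ∀ v ∈ sphere (0 : E) 1, p + m v • v ∉ S)
    {x : E} (hxS : x ∈ S) (hxp : x ≠ p) : ‖x - p‖ < m (‖x - p‖⁻¹ • (x - p)) := by
  -- A uniform lower bound `m₀` makes the region inside the barrier a neighbourhood of `p`.
  obtain ⟨m₀, hm₀, hm₀_le⟩ := (isCompact_sphere (0 : E) 1).exists_forall_le' hm hm_pos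
  set N : E → E := fun x => ‖x - p‖⁻¹ • (x - p)
  have hN_sphere (x : E) (hx : x ≠ p) : N x ∈ sphere 0 1 := inv_norm_sub_smul_sub_mem_sphere hx
  have hN_polar (x : E) (hx : x ≠ p) : p + ‖x - p‖ • N x = x := by
    simp [N, smul_smul, mul_inv_cancel₀ (norm_ne_zero_iff.2 (sub_ne_zero.2 hx))]
  have hg : ContinuousOn (fun x => (‖x - p‖, m (N x))) {p}ᶜ :=
    (continuous_id.sub continuous_const).norm.continuousOn.prodMk
      (hm.comp (continuousOn_inv_norm_sub_smul_sub p) fun x hx => hN_sphere x hx)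
  set inside := ball p m₀ ∪ ({p}ᶜ ∩ (fun x => (‖x - p‖, m (N x))) ⁻¹' {z | z.1 < z.2})
  set outside := {p}ᶜ ∩ (fun x => (‖x - p‖, m (N x))) ⁻¹' {z | z.2 < z.1}
  have h_inside : IsOpen inside := isOpen_ball.union
    (hg.isOpen_inter_preimage isOpen_compl_singleton (isOpen_lt continuous_fst continuous_snd))
  have h_outside : IsOpen outside :=
    hg.isOpen_inter_preimage isOpen_compl_singleton (isOpen_lt continuous_snd continuous_fst)
  have h_disjoint : Disjoint inside outside := by
    refine Set.disjoint_left.2 fun y hy ⟨hyp, hy_out⟩ => ?_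
    rcases hy with hy_ball | ⟨-, hy_in⟩
    · have := hm₀_le _ (hN_sphere y hyp)
      simp only [mem_ball, dist_eq_norm, mem_preimage, mem_ofPred_eq] at hy_ball hy_out
      linarith
    · exact lt_asymm (α := ℝ) hy_in hy_out
  have h_cover : S ⊆ inside ∪ outside := by
    intro y hyS
    by_cases hyp : y = p
    · exact Or.inl (Or.inl (hyp ▸ mem_ball_self hm₀))
    rcases lt_trichotomy ‖y - p‖ (m (N y)) with hlt | heq | hgt
    · exact Or.inl (Or.inr ⟨hyp, hlt⟩)
    · refine absurd ?_ (hbarrier _ (hN_sphere y hyp))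
      rwa [← heq, hN_polar y hyp]
    · exact Or.inr ⟨hyp, hgt⟩
  have hS_inside := hS.subset_left_of_subset_union h_inside h_outside h_disjoint h_cover
    ⟨p, hpS, Or.inl (mem_ball_self hm₀)⟩
  rcases hS_inside hxS with hx_ball | ⟨-, hx_in⟩
  · have := hm₀_le _ (hN_sphere x hxp)
    simp only [mem_ball, dist_eq_norm] at hx_ball
    exact hx_ball.trans_le this
  · exact hx_in

theorem IsPreconnected.subset_closedBall_of_weak_discriminant [ProperSpace E]
    (hH : ContDiff ℝ 3 H) {p : E} {r : ℝ} (hr : 0 < r)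
    (hHess : ∀ v : E, ‖v‖ = 1 → 0 < dirDeriv H 2 p v)
    (hη : ∀ v : E, ‖v‖ = 1 → 2 * |dirDeriv H 1 p v| / ((1 / 2) * dirDeriv H 2 p v) ≤ r)
    (hweak : ∀ v : E, ‖v‖ = 1 → ∀ s : ℝ, |s| ≤ r →
      |dirDeriv H 1 p v| * |dirDeriv H 3 (p + s • v) v| < (3 / 8) * (dirDeriv H 2 p v) ^ 2)
    {S : Set E} (hS : IsPreconnected S) (hpS : p ∈ S) (hSH : ∀ x ∈ S, H x ≤ H p) :
    S ⊆ closedBall p r := by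
  set c := fun v => dirDeriv H 1 p v
  set b := fun v => (1 / 2) * dirDeriv H 2 p v
  set a := fun v => thirdDerivMax H p v r
  set m := fun v => barrierRadius (a v) (b v) r
  have hb (v : E) (hv : v ∈ sphere 0 1) : 0 < b v := by
    have := hHess v (mem_sphere_zero_iff_norm.1 hv)
    positivity
  have hm_pos (v : E) (hv : v ∈ sphere 0 1) : 0 < m v := barrierRadius_pos (hb v hv) hr
  have hm_le (v : E) (hv : v ∈ sphere 0 1) : m v ≤ r := barrierRadius_le (hb v hv) hr
  have hm_cont : ContinuousOn m (sphere 0 1) :=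
    (continuous_thirdDerivMax hH p r).continuousOn.barrierRadius
      (continuous_const.mul (continuous_dirDeriv hH (by norm_num) p)).continuousOn hb hr
  have hquad (v : E) (hv : v ∈ sphere 0 1) : 0 < b v * m v - |c v| - a v * m v ^ 2 := by
    have hv' := mem_sphere_zero_iff_norm.1 hv
    have hcr : 2 * |c v| ≤ b v * r :=
      ((div_le_iff₀ (hb v hv)).1 (hη v hv')).trans_eq (mul_comm _ _)
    obtain ⟨s, hs, has⟩ := exists_eq_thirdDerivMax hH p v hr.le
    have hdisc : |c v| * a v < b v ^ 2 / 4 := by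
      have := hweak v hv' s hs
      simp only [c, a, b, has]
      nlinarith
    exact barrierRadius_quadratic_pos (hb v hv) hr hcr hdisc
  have hbarrier (v : E) (hv : v ∈ sphere 0 1) : p + m v • v ∉ S := by
    intro hvS
    have htaylor : H p + c v * m v + b v * m v ^ 2 - a v * |m v| ^ 3 ≤ H (p + m v • v) :=
      taylor_sub_thirdDerivMax_le hH p v (abs_le.2 ⟨by linarith [hm_pos v hv], hm_le v hv⟩)
    have := mul_pos (hm_pos v hv) (hquad v hv)
    rw [abs_of_pos (hm_pos v hv)] at htaylor
    nlinarith [hSH _ hvS, mul_le_mul_of_nonneg_right (neg_abs_le (c v)) (hm_pos v hv).le]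
  intro x hxS
  rw [mem_closedBall, dist_eq_norm]
  rcases eq_or_ne x p with rfl | hxp
  · simpa using hr.le
  exact (hS.norm_sub_lt_of_barrier hpS hm_cont hm_pos hbarrier hxS hxp).le.trans
    (hm_le _ (inv_norm_sub_smul_sub_mem_sphere hxp))

-- The radius `η₁*` of the paper.
def criticalRadius (H : E → ℝ) (p : E) : ℝ :=
  sSup {x : ℝ | ∃ v : E, ‖v‖ = 1 ∧ x = 2 * |dirDeriv H 1 p v| / ((1 / 2) * dirDeriv H 2 p v)}

section criticalRadius

variable {p : E} (hHess : ∀ v : E, ‖v‖ = 1 → 0 < dirDeriv H 2 p v)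
include hHess

theorem criticalRadius_nonneg : 0 ≤ criticalRadius H p := by
  refine Real.sSup_nonneg ?_
  rintro _ ⟨v, hv, rfl⟩
  have := hHess v hv
  positivity

theorem le_criticalRadius [ProperSpace E] (hH : ContDiff ℝ 3 H) {v : E} (hv : ‖v‖ = 1) :
    2 * |dirDeriv H 1 p v| / ((1 / 2) * dirDeriv H 2 p v) ≤ criticalRadius H p := by
  have hcont : ContinuousOn (fun v => 2 * |dirDeriv H 1 p v| / ((1 / 2) * dirDeriv H 2 p v))
      (sphere 0 1) :=
    (continuous_const.mul (continuous_dirDeriv hH (k := 1) (by norm_num) p).abs).continuousOn.div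
      (continuous_const.mul (continuous_dirDeriv hH (k := 2) (by norm_num) p)).continuousOn
      fun v hv => (mul_pos one_half_pos (hHess v (by simpa using hv))).ne'
  refine le_csSup (((isCompact_sphere 0 1).bddAbove_image hcont).mono ?_) ⟨v, hv, rfl⟩
  rintro _ ⟨w, hw, rfl⟩
  exact ⟨w, by simpa using hw, rfl⟩

theorem dirDeriv_one_eq_zero_of_criticalRadius_eq_zero [ProperSpace E] (hH : ContDiff ℝ 3 H)
    (h0 : criticalRadius H p = 0) {v : E} (hv : ‖v‖ = 1) : dirDeriv H 1 p v = 0 := by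
  have hle := h0 ▸ le_criticalRadius hHess hH hv
  have hD2 := hHess v hv
  have hquot : 2 * |dirDeriv H 1 p v| / ((1 / 2) * dirDeriv H 2 p v) = 0 :=
    le_antisymm hle (by positivity)
  simpa [hD2.ne'] using hquot

end criticalRadius

theorem IsPreconnected.subset_closedBall_criticalRadius [ProperSpace E] (hH : ContDiff ℝ 3 H)
    {p : E} (hHess : ∀ v : E, ‖v‖ = 1 → 0 < dirDeriv H 2 p v)
    (hweak : ∀ v : E, ‖v‖ = 1 → ∀ s : ℝ, |s| ≤ criticalRadius H p →
      |dirDeriv H 1 p v| * |dirDeriv H 3 (p + s • v) v| < (3 / 8) * (dirDeriv H 2 p v) ^ 2)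
    {S : Set E} (hS : IsPreconnected S) (hpS : p ∈ S) (hSH : ∀ x ∈ S, H x ≤ H p) :
    S ⊆ closedBall p (criticalRadius H p) := by
  have hsub {r : ℝ} (hr : 0 < r) (hηr : criticalRadius H p ≤ r)
      (hweak_r : ∀ v : E, ‖v‖ = 1 → ∀ s : ℝ, |s| ≤ r →
        |dirDeriv H 1 p v| * |dirDeriv H 3 (p + s • v) v| < (3 / 8) * (dirDeriv H 2 p v) ^ 2) :
      S ⊆ closedBall p r :=
    hS.subset_closedBall_of_weak_discriminant hH hr hHess
      (fun v hv => (le_criticalRadius hHess hH hv).trans hηr) hweak_r hpS hSH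
  rcases (criticalRadius_nonneg hHess).lt_or_eq with hpos | hzero
  · exact hsub hpos le_rfl hweak
  -- When `η₁* = 0` every first derivative vanishes, and every positive radius is admissible.
  intro x hx
  refine mem_closedBall.2 (le_of_forall_gt_imp_ge_of_dense fun r hr =>
    mem_closedBall.1 (hsub (hzero ▸ hr) hr.le (fun v hv s _ => ?_) hx))
  rw [dirDeriv_one_eq_zero_of_criticalRadius_eq_zero hHess hH hzero.symm hv, abs_zero, zero_mul]
  have := hHess v hv
  positivity

theorem confinement_near_almost_critical_general (n : ℕ)
    (H : EuclideanSpace ℝ (Fin n) → ℝ) (hH : ContDiff ℝ 3 H)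
    (p : EuclideanSpace ℝ (Fin n)) (lam : ℝ) (hlam : 0 < lam)
    (hHess : ∀ v : EuclideanSpace ℝ (Fin n), ‖v‖ = 1 → 2 * lam ≤ dirDeriv H 2 p v)
    (η₁ : ℝ)
    (hη₁ : η₁ = sSup {x : ℝ | ∃ v : EuclideanSpace ℝ (Fin n), ‖v‖ = 1 ∧
      x = 2 * |dirDeriv H 1 p v| / ((1 / 2) * dirDeriv H 2 p v)})
    (hweak : ∀ v : EuclideanSpace ℝ (Fin n), ‖v‖ = 1 → ∀ s : ℝ, |s| ≤ η₁ →
      |dirDeriv H 1 p v| * |dirDeriv H 3 (p + s • v) v| < (3 / 8) * (dirDeriv H 2 p v) ^ 2)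
    (q : ℝ → EuclideanSpace ℝ (Fin n))
    (hq : ContinuousOn q (Set.Icc 0 1)) (hq0 : q 0 = p)
    (hHq : ∀ t ∈ Set.Icc (0:ℝ) 1, H (q t) ≤ H p) :
    ∀ t ∈ Set.Icc (0:ℝ) 1, ‖q t - p‖ ≤ η₁ := by
  subst hη₁
  intro t ht
  have hHess' (v : EuclideanSpace ℝ (Fin n)) (hv : ‖v‖ = 1) : 0 < dirDeriv H 2 p v := by
    linarith [hHess v hv]
  have hq_sublevel : ∀ x ∈ q '' Set.Icc 0 1, H x ≤ H p := by
    rintro _ ⟨s, hs, rfl⟩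
    exact hHq s hs
  have := (isPreconnected_Icc.image q hq).subset_closedBall_criticalRadius hH
    hHess' hweak ⟨0, left_mem_Icc.2 zero_le_one, hq0⟩ hq_sublevel (mem_image_of_mem q ht)
  rwa [mem_closedBall, dist_eq_norm] at this

/-- **Proposition 1 (Confinement near an almost-critical point).** Let `H` be `C³`, with
`H''|_p(v) ≥ 2λ > 0` for all unit `v`, and `η₁* = max_{|v|=1} 2|c(v)|/b(v)`. If the weak
discriminant condition `|H'|_p(v)|·|H'''|_{p+sv}(v)| < (3/8)(H''|_p(v))²` holds for all unit
`v` and `|s| ≤ η₁*`, then every continuous path starting at `p` along which `H` does not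
exceed `H(p)` stays within distance `η₁*` of `p`. -/
theorem confinement_near_almost_critical (n : ℕ) (hn : 0 < n)
    (H : EuclideanSpace ℝ (Fin n) → ℝ) (hH : ContDiff ℝ 3 H)
    (p : EuclideanSpace ℝ (Fin n)) (lam : ℝ) (hlam : 0 < lam)
    (hHess : ∀ v : EuclideanSpace ℝ (Fin n), ‖v‖ = 1 → 2 * lam ≤ dirDeriv H 2 p v)
    (η₁ : ℝ)
    (hη₁ : η₁ = sSup {x : ℝ | ∃ v : EuclideanSpace ℝ (Fin n), ‖v‖ = 1 ∧
      x = 2 * |dirDeriv H 1 p v| / ((1 / 2) * dirDeriv H 2 p v)})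
    (hweak : ∀ v : EuclideanSpace ℝ (Fin n), ‖v‖ = 1 → ∀ s : ℝ, |s| ≤ η₁ →
      |dirDeriv H 1 p v| * |dirDeriv H 3 (p + s • v) v| < (3 / 8) * (dirDeriv H 2 p v) ^ 2)
    (q : ℝ → EuclideanSpace ℝ (Fin n))
    (hq : ContinuousOn q (Set.Icc 0 1)) (hq0 : q 0 = p)
    (hHq : ∀ t ∈ Set.Icc (0:ℝ) 1, H (q t) ≤ H p) :
    ∀ t ∈ Set.Icc (0:ℝ) 1, ‖q t - p‖ ≤ η₁ :=
  confinement_near_almost_critical_general n H hH p lam hlam hHess η₁ hη₁ hweak q hq hq0 hHq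
end
end

section
/- (Explicit annulus for a cubic energy, Proposition II′.) Assume the cubic setting and suppose η₁ < η₀. Then H(q) > H(p) for every q ∈ ℝⁿ with η₁ < |q − p| < η₀(1 + √(1 − η₁/η₀)); in particular this annulus is nonempty. -/
/-!
Along the ray `q = p + r • v` with `‖v‖ = 1`, the energy increment is the real cubic
`r³ T(v,v,v) + r² B(v,v) + r C(v)`. The bounds on `T` and `C` relative to `B` make
`2 η₀` times this cubic at least `r B(v,v) (2 η₀ r - r² - η₀ η₁)`, and the quadratic factor is
positive strictly between its roots `η₀ (1 ± √(1 - η₁/η₀))`; the lower root is at most `η₁`.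
-/

theorem sq_add_mul_lt_two_mul_mul {η₀ η₁ r : ℝ} (hη₀ : 0 < η₀) (hη₁ : 0 ≤ η₁)
    (hη₁₀ : η₁ ≤ η₀) (hr₁ : η₁ < r) (hr₂ : r < η₀ * (1 + Real.sqrt (1 - η₁ / η₀))) :
    r ^ 2 + η₀ * η₁ < 2 * η₀ * r := by
  set s := Real.sqrt (1 - η₁ / η₀)
  have hs_sq : η₀ * s ^ 2 = η₀ - η₁ := by
    rw [Real.sq_sqrt (sub_nonneg.mpr ((div_le_one hη₀).mpr hη₁₀))]
    field_simp
  have hs₀ : 0 ≤ s := Real.sqrt_nonneg _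
  have hs₁ : s ≤ 1 := Real.sqrt_le_one.mpr (by linarith [div_nonneg hη₁ hη₀.le])
  -- `η₁ = η₀ (1 - s) (1 + s)`, so the lower root `η₀ (1 - s)` lies below `η₁`
  have hlower : η₀ * (1 - s) < r := by nlinarith [mul_nonneg (mul_nonneg hη₀.le hs₀) (sub_nonneg.mpr hs₁)]
  nlinarith [mul_pos (sub_pos.mpr hr₂) (sub_pos.mpr hlower)]

theorem cubic_pos_of_abs_le {a b c r η₀ η₁ : ℝ} (hη₀ : 0 ≤ η₀) (hb : 0 < b) (hr : 0 < r)
    (ha : 2 * |a| * η₀ ≤ b) (hc : 2 * |c| ≤ η₁ * b) (hquad : r ^ 2 + η₀ * η₁ < 2 * η₀ * r) :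
    0 < r ^ 3 * a + r ^ 2 * b + r * c := by
  have hcube : -(r ^ 3 * b) ≤ 2 * η₀ * (r ^ 3 * a) := by
    nlinarith [neg_abs_le a, pow_pos hr 3, mul_nonneg (pow_pos hr 3).le hη₀]
  have hlin : -(r * (η₀ * η₁ * b)) ≤ 2 * η₀ * (r * c) := by
    nlinarith [neg_abs_le c, mul_nonneg hη₀ hr.le]
  have hfactor : 0 < r * b * (2 * η₀ * r - r ^ 2 - η₀ * η₁) :=
    mul_pos (mul_pos hr hb) (by linarith)
  have : 0 < 2 * η₀ * (r ^ 3 * a + r ^ 2 * b + r * c) := by nlinarith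
  nlinarith

theorem cubic_form_smul {V : Type*} [AddCommGroup V] [Module ℝ V]
    (T : V →ₗ[ℝ] V →ₗ[ℝ] V →ₗ[ℝ] ℝ) (B : V →ₗ[ℝ] V →ₗ[ℝ] ℝ) (C : V →ₗ[ℝ] ℝ) (r : ℝ) (v : V) :
    T (r • v) (r • v) (r • v) + B (r • v) (r • v) + C (r • v) =
      r ^ 3 * T v v v + r ^ 2 * B v v + r * C v := by
  simp only [map_smul, LinearMap.smul_apply, smul_eq_mul]
  ring

theorem cubic_energy_annulus_general (n : ℕ) (p : EuclideanSpace ℝ (Fin n))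
    (H : EuclideanSpace ℝ (Fin n) → ℝ)
    (T : EuclideanSpace ℝ (Fin n) →ₗ[ℝ] EuclideanSpace ℝ (Fin n) →ₗ[ℝ]
      EuclideanSpace ℝ (Fin n) →ₗ[ℝ] ℝ)
    (B : EuclideanSpace ℝ (Fin n) →ₗ[ℝ] EuclideanSpace ℝ (Fin n) →ₗ[ℝ] ℝ)
    (C : EuclideanSpace ℝ (Fin n) →ₗ[ℝ] ℝ)
    (hH : ∀ x, H (p + x) = H p + T x x x + B x x + C x)
    (lam : ℝ) (hlam : 0 < lam)
    (hbv : ∀ v : EuclideanSpace ℝ (Fin n), ‖v‖ = 1 → lam ≤ B v v)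
    (η₀ η₁ : ℝ) (hη₀ : 0 < η₀) (hη₁ : 0 ≤ η₁)
    (hcv : ∀ v : EuclideanSpace ℝ (Fin n), ‖v‖ = 1 → 2 * |C v| ≤ η₁ * B v v)
    (hav : ∀ v : EuclideanSpace ℝ (Fin n), ‖v‖ = 1 → 2 * |T v v v| * η₀ ≤ B v v)
    (hlt : η₁ < η₀) :
    η₁ < η₀ * (1 + Real.sqrt (1 - η₁ / η₀)) ∧
    ∀ q : EuclideanSpace ℝ (Fin n),
      η₁ < ‖q - p‖ → ‖q - p‖ < η₀ * (1 + Real.sqrt (1 - η₁ / η₀)) → H p < H q := by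
  refine ⟨hlt.trans_le (le_mul_of_one_le_right hη₀.le
    (le_add_of_nonneg_right (Real.sqrt_nonneg _))), fun q hq₁ hq₂ => ?_⟩
  set r := ‖q - p‖
  have hr : 0 < r := hη₁.trans_lt hq₁
  set v : EuclideanSpace ℝ (Fin n) := r⁻¹ • (q - p)
  have hv : ‖v‖ = 1 := norm_smul_inv_norm (norm_pos_iff.mp hr)
  have hq : q = p + r • v := by simp [v, smul_inv_smul₀ hr.ne']
  have hpos := cubic_pos_of_abs_le hη₀.le (hlam.trans_le (hbv v hv)) hr (hav v hv) (hcv v hv)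
    (sq_add_mul_lt_two_mul_mul hη₀ hη₁ hlt.le hq₁ hq₂)
  rw [hq, hH]
  linarith [cubic_form_smul T B C r v]

/-- **Proposition II′ (Explicit annulus for a cubic energy).** Let `H(p+x) = H(p) + T(x,x,x)
+ B(x,x) + C(x)` with `T` symmetric trilinear, `B` symmetric bilinear, `C` linear; suppose
`B(v,v) ≥ λ > 0`, `2|C(v)| ≤ η₁ B(v,v)` and `2|T(v,v,v)| η₀ ≤ B(v,v)` for all unit `v`, with
`η₀ > 0`, `η₁ ≥ 0`. If `η₁ < η₀` then `H(q) > H(p)` on the nonempty annulus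
`η₁ < |q−p| < η₀(1 + √(1 − η₁/η₀))`. -/
theorem cubic_energy_annulus (n : ℕ) (p : EuclideanSpace ℝ (Fin n))
    (H : EuclideanSpace ℝ (Fin n) → ℝ)
    (T : EuclideanSpace ℝ (Fin n) →ₗ[ℝ] EuclideanSpace ℝ (Fin n) →ₗ[ℝ]
      EuclideanSpace ℝ (Fin n) →ₗ[ℝ] ℝ)
    (B : EuclideanSpace ℝ (Fin n) →ₗ[ℝ] EuclideanSpace ℝ (Fin n) →ₗ[ℝ] ℝ)
    (C : EuclideanSpace ℝ (Fin n) →ₗ[ℝ] ℝ)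
    (hT : ∀ x y z, T x y z = T y x z ∧ T x y z = T x z y)
    (hB : ∀ x y, B x y = B y x)
    (hH : ∀ x, H (p + x) = H p + T x x x + B x x + C x)
    (lam : ℝ) (hlam : 0 < lam)
    (hbv : ∀ v : EuclideanSpace ℝ (Fin n), ‖v‖ = 1 → lam ≤ B v v)
    (η₀ η₁ : ℝ) (hη₀ : 0 < η₀) (hη₁ : 0 ≤ η₁)
    (hcv : ∀ v : EuclideanSpace ℝ (Fin n), ‖v‖ = 1 → 2 * |C v| ≤ η₁ * B v v)
    (hav : ∀ v : EuclideanSpace ℝ (Fin n), ‖v‖ = 1 → 2 * |T v v v| * η₀ ≤ B v v)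
    (hlt : η₁ < η₀) :
    η₁ < η₀ * (1 + Real.sqrt (1 - η₁ / η₀)) ∧
    ∀ q : EuclideanSpace ℝ (Fin n),
      η₁ < ‖q - p‖ → ‖q - p‖ < η₀ * (1 + Real.sqrt (1 - η₁ / η₀)) → H p < H q :=
  cubic_energy_annulus_general n p H T B C hH lam hlam hbv η₀ η₁ hη₀ hη₁ hcv hav hlt
end

section
/- (Existence of a stiffening constant, Lemma on matrices A, B.) Let A, B be symmetric real m×m matrices such that B is positive semidefinite and there is λ₀ > 0 with vᵀAv ≥ λ₀|v|² for every v in the null space of B. Then for every λ with 0 < λ < λ₀ there exists κ ≥ 0 such that vᵀ(A + κB)v ≥ λ|v|² for every v ∈ ℝᵐ (i.e. A + κB − λI is positive semidefinite). -/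
open Matrix

/-!
The form of `B` is nonnegative and, on the unit sphere, vanishes only on the null space of `B`,
where the form of `A - λ` is at least `(λ₀ - λ)|v|² > 0`. The open sets
`{v | vᵀ(A - λ + nB)v > 0}` increase with `n` and cover the compact unit sphere, so a single one
contains it; homogeneity of quadratic forms then gives the inequality for all `v`. Any norm's
unit sphere does the job; we use that of the sup norm on `Fin m → ℝ`.
-/

theorem IsCompact.exists_forall_pos_add_mul {X : Type*} [TopologicalSpace X] {K : Set X}
    (hK : IsCompact K) {f g : X → ℝ} (hf : Continuous f) (hg : Continuous g) (hg_nonneg : 0 ≤ g)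
    (hfg : ∀ x ∈ K, g x = 0 → 0 < f x) :
    ∃ κ : ℝ, 0 ≤ κ ∧ ∀ x ∈ K, 0 < f x + κ * g x := by
  let U : ℕ → Set X := fun n => {x | 0 < f x + n * g x}
  have hU_open (n : ℕ) : IsOpen (U n) :=
    isOpen_lt continuous_const (hf.add (continuous_const.mul hg))
  have hU_mono : Monotone U := fun k n hkn x (hx : 0 < f x + k * g x) => by
    show 0 < f x + n * g x
    have : (k : ℝ) * g x ≤ n * g x := by gcongr; exact hg_nonneg x
    linarith
  have hK_cover : K ⊆ ⋃ n, U n := by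
    intro x hx
    rcases (hg_nonneg x).eq_or_lt with hgx | hgx
    · exact Set.mem_iUnion.mpr ⟨0, by simpa [U] using hfg x hx hgx.symm⟩
    · obtain ⟨n, hn⟩ := exists_nat_gt (-f x / g x)
      refine Set.mem_iUnion.mpr ⟨n, ?_⟩
      show 0 < f x + n * g x
      linarith [(div_lt_iff₀ hgx).mp hn]
  obtain ⟨n, hn⟩ := hK.elim_directed_cover U hU_open hK_cover hU_mono.directed_le
  exact ⟨n, n.cast_nonneg, hn⟩

theorem Matrix.dotProduct_mulVec_nonneg_of_forall_mem_sphere {n : Type*} [Fintype n]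
    {M : Matrix n n ℝ} (h : ∀ u ∈ Metric.sphere (0 : n → ℝ) 1, 0 ≤ u ⬝ᵥ M *ᵥ u)
    (v : n → ℝ) : 0 ≤ v ⬝ᵥ M *ᵥ v := by
  rcases eq_or_ne v 0 with rfl | hv
  · simp
  have hu : ‖v‖⁻¹ • v ∈ Metric.sphere (0 : n → ℝ) 1 := by
    simpa using norm_smul_inv_norm (𝕜 := ℝ) hv
  have := h _ hu
  rw [mulVec_smul, dotProduct_smul, smul_dotProduct, smul_eq_mul, smul_eq_mul] at this
  have hpos : 0 < ‖v‖⁻¹ := by positivity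
  exact nonneg_of_mul_nonneg_right (nonneg_of_mul_nonneg_right this hpos) hpos

theorem Matrix.continuous_dotProduct_mulVec {n : Type*} [Fintype n] (M : Matrix n n ℝ) :
    Continuous fun v : n → ℝ => v ⬝ᵥ M *ᵥ v :=
  continuous_id.dotProduct (continuous_const.matrix_mulVec continuous_id)

theorem Matrix.dotProduct_self_pos {n : Type*} [Fintype n] {v : n → ℝ} (hv : v ≠ 0) :
    0 < v ⬝ᵥ v :=
  (dotProduct_star_self_nonneg v).lt_of_ne' (dotProduct_self_eq_zero.not.mpr hv)

theorem stiffening_constant_general (m : ℕ) (A B : Matrix (Fin m) (Fin m) ℝ)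
    (hBpsd : B.PosSemidef)
    (lam₀ : ℝ)
    (hnull : ∀ v : Fin m → ℝ, B.mulVec v = 0 → lam₀ * (v ⬝ᵥ v) ≤ v ⬝ᵥ A.mulVec v) :
    ∀ lam : ℝ, 0 < lam → lam < lam₀ →
      ∃ κ : ℝ, 0 ≤ κ ∧ ∀ v : Fin m → ℝ, lam * (v ⬝ᵥ v) ≤ v ⬝ᵥ (A + κ • B).mulVec v := by
  intro lam _ hlt
  have hA_gap (u : Fin m → ℝ) (hu : u ≠ 0) (hBu : u ⬝ᵥ B *ᵥ u = 0) :
      0 < u ⬝ᵥ (A - lam • 1) *ᵥ u := by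
    have hAu := hnull u ((hBpsd.dotProduct_mulVec_zero_iff u).mp hBu)
    rw [sub_mulVec, dotProduct_sub, smul_mulVec, one_mulVec, dotProduct_smul, smul_eq_mul]
    nlinarith [dotProduct_self_pos hu]
  obtain ⟨κ, hκ, hpos⟩ := (isCompact_sphere (0 : Fin m → ℝ) 1).exists_forall_pos_add_mul
    (continuous_dotProduct_mulVec (A - lam • 1)) (continuous_dotProduct_mulVec B)
    hBpsd.dotProduct_mulVec_nonneg
    fun u hu => hA_gap u (ne_zero_of_mem_sphere one_ne_zero ⟨u, hu⟩)
  refine ⟨κ, hκ, fun v => ?_⟩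
  have hv := dotProduct_mulVec_nonneg_of_forall_mem_sphere (M := A - lam • 1 + κ • B)
    (fun u hu => by
      simpa [add_mulVec, dotProduct_add, smul_mulVec, dotProduct_smul] using (hpos u hu).le) v
  simp only [add_mulVec, sub_mulVec, smul_mulVec, one_mulVec, dotProduct_add, dotProduct_sub,
    dotProduct_smul, smul_eq_mul] at hv ⊢
  linarith

/-- **Lemma (Existence of a stiffening constant).** Let `A, B` be symmetric real `m × m`
matrices with `B` positive semidefinite and `vᵀAv ≥ λ₀|v|²` on the null space of `B` for
some `λ₀ > 0`. Then for every `0 < λ < λ₀` there is `κ ≥ 0` with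
`vᵀ(A + κB)v ≥ λ|v|²` for all `v`. -/
theorem stiffening_constant (m : ℕ) (A B : Matrix (Fin m) (Fin m) ℝ)
    (hA : A.IsSymm) (hB : B.IsSymm) (hBpsd : B.PosSemidef)
    (lam₀ : ℝ) (hlam₀ : 0 < lam₀)
    (hnull : ∀ v : Fin m → ℝ, B.mulVec v = 0 → lam₀ * (v ⬝ᵥ v) ≤ v ⬝ᵥ A.mulVec v) :
    ∀ lam : ℝ, 0 < lam → lam < lam₀ →
      ∃ κ : ℝ, 0 ≤ κ ∧ ∀ v : Fin m → ℝ, lam * (v ⬝ᵥ v) ≤ v ⬝ᵥ (A + κ • B).mulVec v :=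
  stiffening_constant_general m A B hBpsd lam₀ hnull
end

section
/- (Ratio bound, content of Lemma 6.2(2).) Let κ > 0, λ > 0 and μ₀ ≤ λ/2 be reals. Then for all reals x ≥ 0 and μ with μ ≥ μ₀ and 2κx² + μ ≥ λ, one has κx/(2κx² + μ) ≤ (1/√2)·√κ·√(λ − μ₀)/λ. In particular, in the framework setup, every unit vector v ∈ 𝒞 satisfies κ|R(p)v|/(2κ|R(p)v|² + Ω_ω(v)) ≤ (1/√2)·√κ·√(λ − μ₀)/λ. -/
noncomputable section
open scoped BigOperators InnerProductSpace Classical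

/-!
Writing `y = 2κx²`, the ratio is `(√κ/√2)·√y/(2κx² + μ)`, so it suffices to bound `√y/S`
for `S ≥ λ` and `S ≥ y + μ₀`. If `y ≤ λ - μ₀` this is immediate. Otherwise, with `s = √y`
and `r = √(λ - μ₀)`, the claim `sλ ≤ r(s² + μ₀)` is the factorisation
`r s² - λ s + λ r - r³ = (s - r)(r s + r² - λ)`, whose second factor is at least
`2r² - λ = λ - 2μ₀ ≥ 0`.
-/

open Real

lemma sqrt_div_le_sqrt_sub_div {lam μ₀ y S : ℝ} (hlam : 0 < lam) (hμ₀ : μ₀ ≤ lam / 2)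
    (hS : lam ≤ S) (hyS : y + μ₀ ≤ S) :
    √y / S ≤ √(lam - μ₀) / lam := by
  rw [div_le_div_iff₀ (hlam.trans_le hS) hlam]
  rcases le_or_gt y (lam - μ₀) with hy | hy
  · exact mul_le_mul (sqrt_le_sqrt hy) hS hlam.le (sqrt_nonneg _)
  · set r := √(lam - μ₀)
    set s := √y
    have hr2 : r ^ 2 = lam - μ₀ := sq_sqrt (by linarith)
    have hs2 : s ^ 2 = y := sq_sqrt (by linarith)
    have hrs : r ≤ s := sqrt_le_sqrt hy.le
    have hfactor : 0 ≤ (s - r) * (r * s + r ^ 2 - lam) := by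
      apply mul_nonneg (sub_nonneg.mpr hrs)
      nlinarith [mul_le_mul_of_nonneg_left hrs (sqrt_nonneg (lam - μ₀))]
    linear_combination mul_le_mul_of_nonneg_left hyS (sqrt_nonneg (lam - μ₀)) + hfactor
      + r * hs2 - r * hr2

lemma mul_div_two_mul_sq_add_le {κ lam μ₀ x μ : ℝ} (hκ : 0 ≤ κ) (hlam : 0 < lam)
    (hμ₀ : μ₀ ≤ lam / 2) (hx : 0 ≤ x) (hμ : μ₀ ≤ μ) (hS : lam ≤ 2 * κ * x ^ 2 + μ) :
    κ * x / (2 * κ * x ^ 2 + μ) ≤ 1 / √2 * √κ * √(lam - μ₀) / lam := by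
  have hsqrt : √(2 * κ * x ^ 2) = √2 * √κ * x := by
    rw [sqrt_mul (by positivity), sqrt_mul zero_le_two, sqrt_sq hx]
  have hκx : κ * x = √κ / √2 * √(2 * κ * x ^ 2) := by
    rw [hsqrt]
    field_simp
    rw [sq_sqrt hκ, mul_comm]
  have hratio := sqrt_div_le_sqrt_sub_div hlam hμ₀ hS (add_le_add_right hμ _)
  calc κ * x / (2 * κ * x ^ 2 + μ)
      = √κ / √2 * (√(2 * κ * x ^ 2) / (2 * κ * x ^ 2 + μ)) := by rw [hκx, mul_div_assoc]
    _ ≤ √κ / √2 * (√(lam - μ₀) / lam) := by gcongr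
    _ = 1 / √2 * √κ * √(lam - μ₀) / lam := by ring

theorem ratio_bound_general {n d m : ℕ} (E : Fin m → Fin n × Fin n)
    (p : Config n d) (C : Submodule ℝ (Config n d))
    (κ lam μ₀ : ℝ) (ω : EuclideanSpace ℝ (Fin m))
    (hκ : 0 < κ) (hlam : 0 < lam) (hμ₀ : μ₀ ≤ lam / 2)
    (hlower : ∀ v ∈ C, ‖v‖ = 1 → lam ≤ 2 * κ * ‖rig E p v‖ ^ 2 + stressForm E ω v)
    (hμlower : ∀ v ∈ C, ‖v‖ = 1 → μ₀ ≤ stressForm E ω v) :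
    (∀ x μ : ℝ, 0 ≤ x → μ₀ ≤ μ → lam ≤ 2 * κ * x ^ 2 + μ →
      κ * x / (2 * κ * x ^ 2 + μ) ≤
        (1 / Real.sqrt 2) * Real.sqrt κ * Real.sqrt (lam - μ₀) / lam) ∧
    (∀ v ∈ C, ‖v‖ = 1 →
      κ * ‖rig E p v‖ / (2 * κ * ‖rig E p v‖ ^ 2 + stressForm E ω v) ≤
        (1 / Real.sqrt 2) * Real.sqrt κ * Real.sqrt (lam - μ₀) / lam) :=
  ⟨fun _ _ hx hμ hS => mul_div_two_mul_sq_add_le hκ.le hlam hμ₀ hx hμ hS,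
    fun v hv hv1 => mul_div_two_mul_sq_add_le hκ.le hlam hμ₀ (norm_nonneg _)
      (hμlower v hv hv1) (hlower v hv hv1)⟩

/-- **Lemma 6.2(2) (Ratio bound).** For `κ > 0`, `λ > 0`, `μ₀ ≤ λ/2`: whenever `x ≥ 0`,
`μ ≥ μ₀` and `2κx² + μ ≥ λ`, one has `κx/(2κx² + μ) ≤ (1/√2)·√κ·√(λ−μ₀)/λ`. In particular,
in the framework setup every unit `v ∈ 𝒞` satisfies
`κ|R(p)v|/(2κ|R(p)v|² + Ω_ω(v)) ≤ (1/√2)·√κ·√(λ−μ₀)/λ`. -/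
theorem ratio_bound {n d m : ℕ} (E : Fin m → Fin n × Fin n) (hm : 0 < m)
    (hE : ∀ k, (E k).1 ≠ (E k).2)
    (p : Config n d) (C : Submodule ℝ (Config n d))
    (κ lam μ₀ : ℝ) (ω : EuclideanSpace ℝ (Fin m))
    (hκ : 0 < κ) (hlam : 0 < lam) (hμ₀ : μ₀ ≤ lam / 2)
    (hlower : ∀ v ∈ C, ‖v‖ = 1 → lam ≤ 2 * κ * ‖rig E p v‖ ^ 2 + stressForm E ω v)
    (hμlower : ∀ v ∈ C, ‖v‖ = 1 → μ₀ ≤ stressForm E ω v) :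
    (∀ x μ : ℝ, 0 ≤ x → μ₀ ≤ μ → lam ≤ 2 * κ * x ^ 2 + μ →
      κ * x / (2 * κ * x ^ 2 + μ) ≤
        (1 / Real.sqrt 2) * Real.sqrt κ * Real.sqrt (lam - μ₀) / lam) ∧
    (∀ v ∈ C, ‖v‖ = 1 →
      κ * ‖rig E p v‖ / (2 * κ * ‖rig E p v‖ ^ 2 + stressForm E ω v) ≤
        (1 / Real.sqrt 2) * Real.sqrt κ * Real.sqrt (lam - μ₀) / lam) :=
  ratio_bound_general E p C κ lam μ₀ ω hκ hlam hμ₀ hlower hμlower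
end
end
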